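/- arXiv:1907.07096 — 9 statements merged into one kernel-verified Lean document; each statement's English description precedes it below -/
import Mathlib

section
/- For all x in (0, π/4] and y in (x, π/2), we have 1 + sin²(y) < cos²(x)/cos²(y) + (x·tan(x))/(y·tan(y))·sin²(y). -/
open Real

lemma aux_sinc {a b : ℝ} (ha : 0 < a) (hab : a < b) (hb : b < π / 2) :
    a * Real.sin b < b * Real.sin a := by
  have hb0 : 0 < b := ha.trans hab
  have hbpi : b ≤ π := by linarith [Real.pi_pos]
  have h := strictConcaveOn_sin_Icc.2 (Set.mem_Icc.2 ⟨le_rfl, Real.pi_pos.le⟩)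
    (Set.mem_Icc.2 ⟨hb0.le, hbpi⟩) hb0.ne
    (show 0 < (b - a) / b from div_pos (by linarith) hb0)
    (show 0 < a / b from div_pos ha hb0)
    (by field_simp; ring)
  simp only [smul_eq_mul, Real.sin_zero, mul_zero, zero_add, mul_zero, zero_add] at h
  rw [div_mul_cancel₀ _ hb0.ne'] at h
  calc a * Real.sin b = (a / b * Real.sin b) * b := by field_simp
    _ < Real.sin a * b := by nlinarith
    _ = b * Real.sin a := by ring

theorem stmt_0 (x y : ℝ) (hx0 : 0 < x) (hx : x ≤ π / 4) (hxy : x < y) (hy : y < π / 2) :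
    1 + Real.sin y ^ 2 <
      Real.cos x ^ 2 / Real.cos y ^ 2 +
        (x * Real.tan x) / (y * Real.tan y) * Real.sin y ^ 2 := by
  have hy0 : 0 < y := hx0.trans hxy
  have hCy : 0 < Real.cos y := Real.cos_pos_of_mem_Ioo ⟨by linarith [Real.pi_pos], hy⟩
  have hSy : 0 < Real.sin y := Real.sin_pos_of_pos_of_lt_pi hy0 (by linarith [Real.pi_pos])
  have hTy : 0 < Real.tan y := Real.tan_pos_of_pos_of_lt_pi_div_two hy0 hy
  set K : ℝ := Real.sin y ^ 2 / (y * Real.tan y) with hK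
  set f : ℝ → ℝ := fun t => Real.cos t ^ 2 / Real.cos y ^ 2 + (t * Real.tan t) * K with hf
  -- derivative of f
  have hd : ∀ t ∈ Set.Ioo (0 : ℝ) (π / 2), HasDerivAt f
      ((2 * Real.cos t ^ 1 * (-Real.sin t)) / Real.cos y ^ 2 +
        (1 * Real.tan t + t * (1 / Real.cos t ^ 2)) * K) t := by
    intro t ht
    obtain ⟨ht1, ht2⟩ := ht
    have hct : 0 < Real.cos t := Real.cos_pos_of_mem_Ioo ⟨by linarith [Real.pi_pos], ht2⟩
    exact (((Real.hasDerivAt_cos t).pow 2).div_const _).add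
      (((hasDerivAt_id t).mul (Real.hasDerivAt_tan hct.ne')).mul_const K)
  have hderiv_neg : ∀ t ∈ Set.Ioo x y,
      (2 * Real.cos t ^ 1 * (-Real.sin t)) / Real.cos y ^ 2 +
        (1 * Real.tan t + t * (1 / Real.cos t ^ 2)) * K < 0 := by
    intro t ht
    have ht0 : 0 < t := hx0.trans ht.1
    have htp : t < π / 2 := ht.2.trans hy
    have hct : 0 < Real.cos t := Real.cos_pos_of_mem_Ioo ⟨by linarith [Real.pi_pos], htp⟩
    have hst : 0 < Real.sin t := Real.sin_pos_of_pos_of_lt_pi ht0 (by linarith [Real.pi_pos])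
    have hsc : Real.sin t * Real.cos t < t := by
      have := Real.sin_lt (show (0:ℝ) < 2 * t by linarith)
      rw [Real.sin_two_mul] at this; linarith
    have hts : t * Real.sin y < y * Real.sin t := aux_sinc ht0 ht.2 hy
    have hcc : Real.cos y < Real.cos t :=
      Real.cos_lt_cos_of_nonneg_of_le_pi ht0.le (by linarith [Real.pi_pos]) ht.2
    have key : (Real.sin t * Real.cos t + t) * (Real.sin y * Real.cos y) * Real.cos y ^ 2
        < 2 * (Real.sin t * Real.cos t) * (y * Real.cos t ^ 2) := by
      have A1 : (Real.sin t * Real.cos t + t) * (Real.sin y * Real.cos y) * Real.cos y ^ 2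
          < 2 * t * (Real.sin y * Real.cos y ^ 3) := by
        nlinarith [mul_pos (mul_pos hSy hCy) (pow_pos hCy 2)]
      have A2 : 2 * t * (Real.sin y * Real.cos y ^ 3) ≤ 2 * y * (Real.sin t * Real.cos y ^ 3) := by
        nlinarith [pow_pos hCy 3]
      have hc3 : Real.cos y ^ 3 < Real.cos t ^ 3 := by
        have h1 : 0 < (Real.cos t - Real.cos y) *
            (Real.cos t ^ 2 + Real.cos t * Real.cos y + Real.cos y ^ 2) :=
          mul_pos (sub_pos.2 hcc) (by positivity)
        nlinarith [h1]
      have A3 : 2 * y * (Real.sin t * Real.cos y ^ 3)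
          < 2 * (Real.sin t * Real.cos t) * (y * Real.cos t ^ 2) := by
        nlinarith [mul_pos hy0 hst]
      linarith
    have e1 : (2 * Real.cos t ^ 1 * (-Real.sin t)) / Real.cos y ^ 2 +
        (1 * Real.tan t + t * (1 / Real.cos t ^ 2)) * K =
        (Real.sin t * Real.cos t + t) * (Real.sin y * Real.cos y) / (y * Real.cos t ^ 2)
          - 2 * (Real.sin t * Real.cos t) / Real.cos y ^ 2 := by
      rw [hK, Real.tan_eq_sin_div_cos, Real.tan_eq_sin_div_cos]
      field_simp
      ring
    rw [e1, sub_neg]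
    rw [div_lt_div_iff₀ (by positivity) (by positivity)]
    nlinarith [key, mul_pos hy0 (mul_pos hct hct)]
  have hcont : ContinuousOn f (Set.Icc x y) := by
    apply ContinuousOn.add
    · exact ((continuous_cos.pow 2).div_const _).continuousOn
    · intro t ht
      have htp : t < π / 2 := lt_of_le_of_lt ht.2 hy
      have hct : Real.cos t ≠ 0 :=
        (Real.cos_pos_of_mem_Ioo ⟨by linarith [Real.pi_pos, hx0, ht.1], htp⟩).ne'
      exact ((continuousAt_id.mul (Real.continuousAt_tan.mpr hct)).mul
        continuousAt_const).continuousWithinAt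
  have hanti : StrictAntiOn f (Set.Icc x y) := by
    apply strictAntiOn_of_deriv_neg (convex_Icc x y) hcont
    intro t ht
    rw [interior_Icc] at ht
    have hmem : t ∈ Set.Ioo (0 : ℝ) (π / 2) := ⟨hx0.trans ht.1, ht.2.trans hy⟩
    rw [(hd t hmem).deriv]
    exact hderiv_neg t ht
  have hlt : f y < f x :=
    hanti (Set.left_mem_Icc.2 hxy.le) (Set.right_mem_Icc.2 hxy.le) hxy
  have hfy : f y = 1 + Real.sin y ^ 2 := by
    rw [hf, hK]
    field_simp
  have hfx : f x = Real.cos x ^ 2 / Real.cos y ^ 2 +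
      (x * Real.tan x) / (y * Real.tan y) * Real.sin y ^ 2 := by
    rw [hf, hK]; ring
  rw [hfy, hfx] at hlt
  exact hlt
end

section
/- The function x ↦ (tan(x) + x·sec²(x))/sin(2x) is monotonically increasing on (0, π/2). -/
open Real

theorem stmt_2 :
    MonotoneOn (fun x : ℝ => (Real.tan x + x * (1 / Real.cos x) ^ 2) / Real.sin (2 * x))
      (Set.Ioo 0 (π / 2)) := by
  intro x hx y hy hxy
  obtain ⟨hx0, hx2⟩ := hx
  obtain ⟨hy0, hy2⟩ := hy
  have hcx : 0 < Real.cos x := Real.cos_pos_of_mem_Ioo ⟨by linarith [Real.pi_pos], hx2⟩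
  have hcy : 0 < Real.cos y := Real.cos_pos_of_mem_Ioo ⟨by linarith [Real.pi_pos], hy2⟩
  have hsx : 0 < Real.sin x := Real.sin_pos_of_pos_of_lt_pi hx0 (by linarith [Real.pi_pos])
  have hsy : 0 < Real.sin y := Real.sin_pos_of_pos_of_lt_pi hy0 (by linarith [Real.pi_pos])
  have hcyx : Real.cos y ≤ Real.cos x :=
    Real.cos_le_cos_of_nonneg_of_le_pi (le_of_lt hx0) (by linarith [Real.pi_pos]) hxy
  -- x * sin y ≤ y * sin x  from concavity of sin on [0, π]
  have hkey : x * Real.sin y ≤ y * Real.sin x := by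
    have hconc := strictConcaveOn_sin_Icc.concaveOn
    have h0 : (0:ℝ) ∈ Set.Icc (0:ℝ) π := ⟨le_refl 0, le_of_lt Real.pi_pos⟩
    have hym : y ∈ Set.Icc (0:ℝ) π := ⟨le_of_lt hy0, by linarith [Real.pi_pos]⟩
    have ha : (0:ℝ) ≤ x / y := by positivity
    have hb : (0:ℝ) ≤ 1 - x / y := by
      have : x / y ≤ 1 := (div_le_one hy0).2 hxy
      linarith
    have hab : x / y + (1 - x / y) = 1 := by ring
    have := hconc.2 hym h0 ha hb hab
    simp only [smul_eq_mul, mul_zero, add_zero, Real.sin_zero] at this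
    have hxy' : x / y * y = x := div_mul_cancel₀ x (ne_of_gt hy0)
    rw [hxy'] at this
    have : x / y * Real.sin y ≤ Real.sin x := by linarith
    calc x * Real.sin y = y * (x / y * Real.sin y) := by field_simp
      _ ≤ y * Real.sin x := by nlinarith
  simp only [Real.tan_eq_sin_div_cos, Real.sin_two_mul]
  rw [div_le_div_iff₀ (by positivity) (by positivity)]
  have hc2 : Real.cos y ^ 2 ≤ Real.cos x ^ 2 := by nlinarith
  have hc3 : Real.cos y ^ 3 ≤ Real.cos x ^ 3 := by nlinarith
  have e1 : Real.sin x / Real.cos x + x * (1 / Real.cos x) ^ 2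
      = (Real.sin x * Real.cos x + x) / Real.cos x ^ 2 := by field_simp
  have e2 : Real.sin y / Real.cos y + y * (1 / Real.cos y) ^ 2
      = (Real.sin y * Real.cos y + y) / Real.cos y ^ 2 := by field_simp
  rw [e1, e2, div_mul_eq_mul_div, div_mul_eq_mul_div, div_le_div_iff₀ (by positivity) (by positivity)]
  ring_nf
  nlinarith [mul_le_mul hkey hc3 (by positivity) (by positivity),
    mul_le_mul hc2 (le_refl (Real.sin x * Real.sin y * Real.cos x * Real.cos y)) (by positivity) (by positivity),
    mul_pos hsx hsy, mul_pos hcx hcy, sq_nonneg (Real.cos x - Real.cos y)]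
end

section
/- Fix x > 0 and set c = 2 + x/π. Then the function H(t) = cos²(π/t)·tan²(cπ/(2t)) / (cos²(π/t) − cos²(cπ/(2t))) is monotonically decreasing on (max(c,4), ∞). -/
open Real


theorem msl (x : ℝ) (hx : 0 ≤ x) : x - x^3/6 ≤ Real.sin x := by
  have mono : MonotoneOn (fun y => Real.sin y - (y - y^3/6)) (Set.Ici 0) := by
    have hd : ∀ y : ℝ, HasDerivAt (fun y => Real.sin y - (y - y^3/6))
        (Real.cos y - (1 - y^2/2)) y := by
      intro y
      have h1 : HasDerivAt (fun y : ℝ => y - y^3/6) (1 - 3*y^2/6) y := by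
        exact ((hasDerivAt_id y).sub (((hasDerivAt_pow 3 y)).div_const 6)).congr_deriv (by norm_num)
      have := (Real.hasDerivAt_sin y).sub h1
      exact this.congr_deriv (by ring)
    apply monotoneOn_of_deriv_nonneg (convex_Ici 0)
    · exact (Continuous.continuousOn (by continuity))
    · intro y hy; exact (hd y).differentiableAt.differentiableWithinAt
    · intro y hy
      rw [(hd y).deriv]
      have := Real.one_sub_sq_div_two_le_cos (x := y)
      nlinarith [this]
  have h := mono (Set.self_mem_Ici) hx hx
  simp at h
  nlinarith [h]

theorem mcu (x : ℝ) (hx : 0 ≤ x) : Real.cos x ≤ 1 - x^2/2 + x^4/24 := by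
  have mono : MonotoneOn (fun y => (1 - y^2/2 + y^4/24) - Real.cos y) (Set.Ici 0) := by
    have hd : ∀ y : ℝ, HasDerivAt (fun y => (1 - y^2/2 + y^4/24) - Real.cos y)
        ((-y + y^3/6) - (-Real.sin y)) y := by
      intro y
      have h1 : HasDerivAt (fun y : ℝ => 1 - y^2/2 + y^4/24) (-y + y^3/6) y := by
        have := ((hasDerivAt_const y (1:ℝ)).sub ((hasDerivAt_pow 2 y).div_const 2)).add
          ((hasDerivAt_pow 4 y).div_const 24)
        refine this.congr_deriv ?_; norm_num; ring
      exact h1.sub (Real.hasDerivAt_cos y)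
    apply monotoneOn_of_deriv_nonneg (convex_Ici 0)
    · exact (Continuous.continuousOn (by continuity))
    · intro y hy; exact (hd y).differentiableAt.differentiableWithinAt
    · intro y hy
      rw [(hd y).deriv]
      rw [interior_Ici] at hy
      have := msl y hy.le
      nlinarith
  have h := mono (Set.self_mem_Ici) hx hx
  simp at h
  nlinarith [h]

theorem msu (x : ℝ) (hx : 0 ≤ x) : Real.sin x ≤ x - x^3/6 + x^5/120 := by
  have mono : MonotoneOn (fun y => (y - y^3/6 + y^5/120) - Real.sin y) (Set.Ici 0) := by
    have hd : ∀ y : ℝ, HasDerivAt (fun y => (y - y^3/6 + y^5/120) - Real.sin y)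
        ((1 - y^2/2 + y^4/24) - Real.cos y) y := by
      intro y
      have h1 : HasDerivAt (fun y : ℝ => y - y^3/6 + y^5/120) (1 - y^2/2 + y^4/24) y := by
        have := ((hasDerivAt_id y).sub ((hasDerivAt_pow 3 y).div_const 6)).add
          ((hasDerivAt_pow 5 y).div_const 120)
        refine this.congr_deriv ?_; push_cast; norm_num; ring
      exact h1.sub (Real.hasDerivAt_sin y)
    apply monotoneOn_of_deriv_nonneg (convex_Ici 0)
    · exact (Continuous.continuousOn (by continuity))
    · intro y hy; exact (hd y).differentiableAt.differentiableWithinAt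
    · intro y hy
      rw [(hd y).deriv]
      rw [interior_Ici] at hy
      have := mcu y hy.le
      nlinarith
  have h := mono (Set.self_mem_Ici) hx hx
  simp at h
  nlinarith [h]

theorem L5 (y : ℝ) (hy : 0 ≤ y) (hy2 : y ≤ π) : (6 + y^2) * Real.sin y ≤ 6*y := by
  have h := msu y hy
  have hpi : y ≤ 3.15 := by linarith [Real.pi_lt_d2]
  have h2 : (6 + y^2) * Real.sin y ≤ (6 + y^2) * (y - y^3/6 + y^5/120) :=
    mul_le_mul_of_nonneg_left h (by positivity)
  have h3 : (6 + y^2) * (y - y^3/6 + y^5/120) ≤ 6*y := by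
    nlinarith [mul_nonneg (pow_nonneg hy 5) (show (0:ℝ) ≤ 14 - y^2 by nlinarith)]
  linarith

theorem L7 (a : ℝ) (ha : 0 ≤ a) (ha2 : a ≤ 0.7854) : Real.sin a ≤ 1.32 * a * Real.cos a := by
  have h1 := msu a ha
  have h2 := Real.one_sub_sq_div_two_le_cos (x := a)
  have h3 : a - a^3/6 + a^5/120 ≤ 1.32 * a * (1 - a^2/2) := by
    nlinarith [pow_nonneg ha 3, pow_nonneg ha 5, sq_nonneg a, mul_nonneg ha ha,
      mul_le_mul_of_nonneg_left (mul_le_mul ha2 ha2 ha (by norm_num)) ha]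
  have h4 : 1.32 * a * (1 - a^2/2) ≤ 1.32 * a * Real.cos a :=
    mul_le_mul_of_nonneg_left h2 (by positivity)
  linarith

theorem L6 (y : ℝ) (hy : 0 ≤ y) (hy2 : y ≤ π) : 3*y*Real.cos y ≤ (3 - y^2) * Real.sin y := by
  rcases le_or_gt y (π/2) with h | h
  · have hs := msl y hy
    have hc := mcu y hy
    have hy3 : y ≤ 1.5708 := by linarith [Real.pi_lt_d6]
    have h3 : 0 ≤ 3 - y^2 := by nlinarith
    have h4 : 0 ≤ y - y^3/6 := by nlinarith
    calc 3*y*Real.cos y ≤ 3*y*(1 - y^2/2 + y^4/24) := by nlinarith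
      _ ≤ (3 - y^2) * (y - y^3/6) := by nlinarith [pow_nonneg hy 5]
      _ ≤ (3 - y^2) * Real.sin y := mul_le_mul_of_nonneg_left hs h3
  · have hcos : Real.cos y ≤ 0 := Real.cos_nonpos_of_pi_div_two_le_of_le h.le (by linarith)
    have hs1 : Real.sin y ≤ 1 := Real.sin_le_one y
    have hs0 : 0 ≤ Real.sin y := Real.sin_nonneg_of_nonneg_of_le_pi hy hy2
    have hπ : 0 < π := Real.pi_pos
    have hnc : 2/π * (y - π/2) ≤ Real.sin (y - π/2) :=
      Real.mul_le_sin (by linarith) (by linarith)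
    rw [Real.sin_sub_pi_div_two] at hnc
    have hrw : 2/π * (y - π/2) = (2*y - π)/π := by field_simp
    rw [hrw, div_le_iff₀ hπ] at hnc
    -- hnc : 2*y - π ≤ -cos y * π
    have hπ1 : π ≤ 3.1416 := by linarith [Real.pi_lt_d6]
    have hπ2 : 3.1415 ≤ π := by linarith [Real.pi_gt_d6]
    have hA1 : (2*y - π) * (3*y) ≤ (-Real.cos y * π) * (3*y) :=
      mul_le_mul_of_nonneg_right hnc (by linarith)
    rcases le_or_gt (y^2) 3 with h2 | h2
    · nlinarith [mul_nonneg hs0 (by linarith : (0:ℝ) ≤ 3 - y^2),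
        mul_nonneg (by linarith : (0:ℝ) ≤ 3*y) (neg_nonneg.2 hcos)]
    · have e1 : (y^2 - 3) * (1 - Real.sin y) ≥ 0 :=
        mul_nonneg (by linarith) (by linarith)
      nlinarith [sq_nonneg (y - 1.65), mul_pos (by linarith : (0:ℝ) < y) hπ]

set_option maxHeartbeats 1000000 in
theorem K_nonneg (a b : ℝ) (ha : 0 ≤ a) (hab : a ≤ b) (ha4 : a ≤ 0.7854) (hb : b < π/2) :
    0 ≤ a * Real.sin a * Real.sin b * Real.cos b^3 + b * Real.cos a^3
      - b * Real.cos a * Real.cos b^2 * (1 + Real.sin b^2) := by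
  have hπ1 : π ≤ 3.1416 := by linarith [Real.pi_lt_d6]
  have hπ2 : 3.1415 ≤ π := by linarith [Real.pi_gt_d6]
  have hb0 : 0 ≤ b := le_trans ha hab
  have hsa0 : 0 ≤ Real.sin a := Real.sin_nonneg_of_nonneg_of_le_pi ha (by linarith)
  have hca0 : 0 < Real.cos a := Real.cos_pos_of_mem_Ioo ⟨by linarith, by linarith⟩
  have hsb0 : 0 ≤ Real.sin b := Real.sin_nonneg_of_nonneg_of_le_pi hb0 (by linarith)
  have hcb0 : 0 < Real.cos b := Real.cos_pos_of_mem_Ioo ⟨by linarith, hb⟩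
  have hSA0 : 0 ≤ Real.sin (b + a) :=
    Real.sin_nonneg_of_nonneg_of_le_pi (by linarith) (by linarith)
  have hSB0 : 0 ≤ Real.sin (b - a) :=
    Real.sin_nonneg_of_nonneg_of_le_pi (by linarith) (by linarith)
  have F1 := L5 (2*b) (by linarith) (by linarith)
  have F2 := L7 a ha ha4
  have F3 := L6 (b + a) (by linarith) (by linarith)
  have F4 := L6 (b - a) (by linarith) (by linarith)
  rw [Real.sin_two_mul] at F1
  rw [Real.sin_add, Real.cos_add] at F3
  rw [Real.sin_sub, Real.cos_sub] at F4
  rw [Real.sin_add] at hSA0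
  rw [Real.sin_sub] at hSB0
  set sa := Real.sin a
  set ca := Real.cos a
  set sb := Real.sin b
  set cb := Real.cos b
  have pa : sa^2 + ca^2 = 1 := Real.sin_sq_add_cos_sq a
  have pb : sb^2 + cb^2 = 1 := Real.sin_sq_add_cos_sq b
  have hX : 0 ≤ ca*sb*cb*((sb*ca + cb*sa)*(sb*ca - cb*sa)) :=
    mul_nonneg (mul_nonneg (mul_nonneg hca0.le hsb0) hcb0.le) (mul_nonneg hSA0 hSB0)
  have hid : a * sa * sb * cb^3 + b * ca^3 - b * ca * cb^2 * (1 + sb^2)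
      = b*ca*((sb*ca + cb*sa)*(sb*ca - cb*sa))
        - a*sa*sb*cb*((sb*ca + cb*sa)*(sb*ca - cb*sa))
        - (1/2)*ca*sb*cb*((b+a)*(cb*ca - sb*sa)*(sb*ca - cb*sa)
            + (b-a)*(cb*ca + sb*sa)*(sb*ca + cb*sa)) := by
    linear_combination (b*ca - b*ca*sb^2 + b*ca*sb^2*cb^2 - a*sa*sb*cb^3) * pa
      + (-(b*ca) + b*sa^2*ca) * pb
  have hss : 0 ≤ (sb*ca + cb*sa)*(sb*ca - cb*sa) := mul_nonneg hSA0 hSB0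
  have k1 := mul_le_mul_of_nonneg_right F1
    (show 0 ≤ ca*((sb*ca + cb*sa)*(sb*ca - cb*sa))/12 from
      div_nonneg (mul_nonneg hca0.le hss) (by norm_num))
  have k2 := mul_le_mul_of_nonneg_right F2
    (show 0 ≤ a*sb*cb*((sb*ca + cb*sa)*(sb*ca - cb*sa)) from
      mul_nonneg (mul_nonneg (mul_nonneg ha hsb0) hcb0.le) hss)
  have k3 := mul_le_mul_of_nonneg_right F3
    (show 0 ≤ ca*sb*cb*(sb*ca - cb*sa)/3 from
      div_nonneg (mul_nonneg (mul_nonneg (mul_nonneg hca0.le hsb0) hcb0.le) hSB0) (by norm_num))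
  have k4 := mul_le_mul_of_nonneg_right F4
    (show 0 ≤ ca*sb*cb*(sb*ca + cb*sa)/3 from
      div_nonneg (mul_nonneg (mul_nonneg (mul_nonneg hca0.le hsb0) hcb0.le) hSA0) (by norm_num))
  have hfin : 0 ≤ (ca*sb*cb*((sb*ca + cb*sa)*(sb*ca - cb*sa))) * (b^2 + a^2/3 - 1.32*a^2) :=
    mul_nonneg hX (by nlinarith)
  rw [hid]
  linarith [k1, k2, k3, k4, hfin]

set_option maxHeartbeats 1600000 in
theorem deriv_aux (c t : ℝ) (hc2 : 2 < c) (ht4 : 4 < t) (htc : c < t) :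
    HasDerivAt (fun t : ℝ =>
        Real.cos (π / t) ^ 2 * Real.tan (c * π / (2 * t)) ^ 2 /
          (Real.cos (π / t) ^ 2 - Real.cos (c * π / (2 * t)) ^ 2))
      (((2*Real.cos (π/t)*Real.sin (π/t)*(π/t^2) * Real.tan (c*π/(2*t))^2
          + Real.cos (π/t)^2 * (-(c*π*Real.tan (c*π/(2*t))/(t^2*Real.cos (c*π/(2*t))^2))))
          * (Real.cos (π/t)^2 - Real.cos (c*π/(2*t))^2)
        - Real.cos (π/t)^2 * Real.tan (c*π/(2*t))^2
          * (2*Real.cos (π/t)*Real.sin (π/t)*(π/t^2) - c*π*Real.sin (c*π/(2*t))*Real.cos (c*π/(2*t))/t^2))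
        / (Real.cos (π/t)^2 - Real.cos (c*π/(2*t))^2)^2) t
    ∧ (((2*Real.cos (π/t)*Real.sin (π/t)*(π/t^2) * Real.tan (c*π/(2*t))^2
          + Real.cos (π/t)^2 * (-(c*π*Real.tan (c*π/(2*t))/(t^2*Real.cos (c*π/(2*t))^2))))
          * (Real.cos (π/t)^2 - Real.cos (c*π/(2*t))^2)
        - Real.cos (π/t)^2 * Real.tan (c*π/(2*t))^2
          * (2*Real.cos (π/t)*Real.sin (π/t)*(π/t^2) - c*π*Real.sin (c*π/(2*t))*Real.cos (c*π/(2*t))/t^2))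
        / (Real.cos (π/t)^2 - Real.cos (c*π/(2*t))^2)^2) ≤ 0 := by
  have hπ : 0 < π := Real.pi_pos
  have hπ1 : π ≤ 3.1416 := by linarith [Real.pi_lt_d6]
  have ht0 : 0 < t := by linarith
  have hu0 : 0 < π/t := by positivity
  have hu4 : π/t < π/4 := by
    rw [div_lt_div_iff₀ ht0 (by norm_num)]; nlinarith
  have hv0 : 0 < c*π/(2*t) := by positivity
  have hv2 : c*π/(2*t) < π/2 := by
    rw [div_lt_div_iff₀ (by linarith) (by norm_num)]; nlinarith
  have huv : π/t < c*π/(2*t) := by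
    rw [div_lt_div_iff₀ ht0 (by linarith)]; nlinarith [mul_pos hπ ht0]
  have hcu : 0 < Real.cos (π/t) := Real.cos_pos_of_mem_Ioo ⟨by linarith, by linarith⟩
  have hcv : 0 < Real.cos (c*π/(2*t)) := Real.cos_pos_of_mem_Ioo ⟨by linarith, hv2⟩
  have hclt : Real.cos (c*π/(2*t)) < Real.cos (π/t) :=
    Real.cos_lt_cos_of_nonneg_of_le_pi hu0.le (by linarith) huv
  have hden : 0 < Real.cos (π/t)^2 - Real.cos (c*π/(2*t))^2 := by nlinarith
  have hsu : 0 < Real.sin (π/t) := Real.sin_pos_of_pos_of_lt_pi hu0 (by linarith)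
  have hsv : 0 < Real.sin (c*π/(2*t)) := Real.sin_pos_of_pos_of_lt_pi hv0 (by linarith)
  -- derivative construction
  have h1 : HasDerivAt (fun y : ℝ => π / y) (-(π/t^2)) t := by
    have h := (hasDerivAt_const t π).div (hasDerivAt_id t) ht0.ne'
    simp only [id_eq] at h
    refine h.congr_deriv ?_
    ring
  have h4 : HasDerivAt (fun y : ℝ => c * π / (2 * y)) (-(c*π/(2*t^2))) t := by
    have h2y : HasDerivAt (fun y : ℝ => 2 * y) 2 t := by
      simpa using (hasDerivAt_id t).const_mul 2
    have h := (hasDerivAt_const t (c*π)).div h2y (by positivity)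
    refine h.congr_deriv ?_
    field_simp
    ring
  have h2 : HasDerivAt (fun y : ℝ => Real.cos (π/y)) (-Real.sin (π/t) * -(π/t^2)) t :=
    (Real.hasDerivAt_cos (π/t)).comp t h1
  have h3 : HasDerivAt (fun y : ℝ => Real.cos (π/y)^2)
      (2*Real.cos (π/t)*Real.sin (π/t)*(π/t^2)) t := by
    have h := h2.pow 2
    refine h.congr_deriv ?_
    push_cast
    ring
  have h5 : HasDerivAt (fun y : ℝ => Real.tan (c*π/(2*y)))
      (1/Real.cos (c*π/(2*t))^2 * -(c*π/(2*t^2))) t :=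
    HasDerivAt.comp (h₂ := Real.tan) t (Real.hasDerivAt_tan hcv.ne') h4
  have h6 : HasDerivAt (fun y : ℝ => Real.tan (c*π/(2*y))^2)
      (-(c*π*Real.tan (c*π/(2*t))/(t^2*Real.cos (c*π/(2*t))^2))) t := by
    have h := h5.pow 2
    refine h.congr_deriv ?_
    push_cast
    field_simp
  have h8 : HasDerivAt (fun y : ℝ => Real.cos (c*π/(2*y)))
      (-Real.sin (c*π/(2*t)) * -(c*π/(2*t^2))) t :=
    HasDerivAt.comp (h₂ := Real.cos) t (Real.hasDerivAt_cos (c*π/(2*t))) h4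
  have h9 : HasDerivAt (fun y : ℝ => Real.cos (c*π/(2*y))^2)
      (c*π*Real.sin (c*π/(2*t))*Real.cos (c*π/(2*t))/t^2) t := by
    have h := h8.pow 2
    refine h.congr_deriv ?_
    push_cast
    field_simp
  have h7 := h3.mul h6
  have h10 := h3.sub h9
  have h11 := h7.div h10 hden.ne'
  refine ⟨h11, ?_⟩
  -- sign of the derivative
  apply div_nonpos_of_nonpos_of_nonneg _ (sq_nonneg _)
  have hK := K_nonneg (π/t) (c*π/(2*t)) hu0.le huv.le
    (by
      have h44 : π/4 ≤ 0.7854 := by linarith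
      have h45 : π/t ≤ π/4 := hu4.le
      linarith) hv2
  set u := π/t
  set v := c*π/(2*t)
  have hP : 0 < u * Real.cos v^3 := by positivity
  have hident : ((2*Real.cos u*Real.sin u*(π/t^2) * Real.tan v^2
          + Real.cos u^2 * (-(c*π*Real.tan v/(t^2*Real.cos v^2))))
          * (Real.cos u^2 - Real.cos v^2)
        - Real.cos u^2 * Real.tan v^2
          * (2*Real.cos u*Real.sin u*(π/t^2) - c*π*Real.sin v*Real.cos v/t^2))
        * (u * Real.cos v^3)
      = -(2*(π/t^2) * Real.sin v * Real.cos u *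
          (u * Real.sin u * Real.sin v * Real.cos v^3 + v * Real.cos u^3
            - v * Real.cos u * Real.cos v^2 * (1 + Real.sin v^2))) := by
    rw [Real.tan_eq_sin_div_cos]
    field_simp
    ring
  have hR : 0 ≤ 2*(π/t^2) * Real.sin v * Real.cos u *
      (u * Real.sin u * Real.sin v * Real.cos v^3 + v * Real.cos u^3
        - v * Real.cos u * Real.cos v^2 * (1 + Real.sin v^2)) :=
    mul_nonneg (mul_nonneg (mul_nonneg (by positivity) hsv.le) hcu.le) hK
  exact le_of_mul_le_mul_right (by rw [hident, zero_mul]; linarith) hP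


theorem stmt_4 (x : ℝ) (hx : 0 < x) (c : ℝ) (hc : c = 2 + x / π) :
    AntitoneOn
      (fun t : ℝ =>
        Real.cos (π / t) ^ 2 * Real.tan (c * π / (2 * t)) ^ 2 /
          (Real.cos (π / t) ^ 2 - Real.cos (c * π / (2 * t)) ^ 2))
      (Set.Ioi (max c 4)) := by
  have hπ : 0 < π := Real.pi_pos
  have hc2 : 2 < c := by
    rw [hc]; have := div_pos hx hπ; linarith
  apply antitoneOn_of_deriv_nonpos (convex_Ioi (max c 4))
  · intro t ht
    exact ((deriv_aux c t hc2 (lt_of_le_of_lt (le_max_right c 4) ht)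
      (lt_of_le_of_lt (le_max_left c 4) ht)).1.differentiableAt).continuousAt.continuousWithinAt
  · intro t ht
    rw [interior_Ioi] at ht
    exact ((deriv_aux c t hc2 (lt_of_le_of_lt (le_max_right c 4) ht)
      (lt_of_le_of_lt (le_max_left c 4) ht)).1.differentiableAt).differentiableWithinAt
  · intro t ht
    rw [interior_Ioi] at ht
    have h := deriv_aux c t hc2 (lt_of_le_of_lt (le_max_right c 4) ht)
      (lt_of_le_of_lt (le_max_left c 4) ht)
    rw [h.1.deriv]
    exact h.2
end

section
/- For a hyperbolic regular n-gon of area a (n ≥ 3, 0 ≤ a < (n−2)π), the perimeter is Perim(n,a) = 2n·arcosh(cos(π/n)/sin(((n−2)π − a)/(2n))). For fixed a > 0, Perim(n,a) is strictly decreasing in n; for fixed n, Perim(n,a) is strictly increasing in a. -/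
open Real

noncomputable def arcosh (x : ℝ) : ℝ := Real.log (x + Real.sqrt (x ^ 2 - 1))

/-- Perimeter of the regular hyperbolic `n`-gon of area `a`. -/
noncomputable def Perim (n a : ℝ) : ℝ :=
  2 * n * _root_.arcosh (Real.cos (π / n) / Real.sin (((n - 2) * π - a) / (2 * n)))

open Set

/-!
Write `θ = π / n` and `k = 1 + a / (2π)`. The right triangle cut out of the polygon by the centre,
a vertex and the midpoint of a side gives `cosh s = cos θ / cos kθ` for the half side `s`, and with
`u = (k + 1)θ / 2`, `v = (k - 1)θ / 2` this becomes `tanh (s / 2) = √(tan u · tan v)`. Hence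
`Perim n a = 4n · artanh √(tan u · tan v)`, where `u = (π + a/4)/n` and `v = (a/4)/n`.

For fixed `n`, both `u` and `v` grow with `a`. For fixed `a > 0`, put `x = 1 / n`,
`c = π + a/4`, `d = a/4` and `T = √(tan (c x) · tan (d x))`; then
`Perim = 4 · (artanh T / T) · (T / x)`. The factor `T / x` is the geometric mean of
`tan (c x) / x` and `tan (d x) / x`, strictly increasing by convexity of `tan`, and
`artanh T / T = ∑ T^(2k) / (2k + 1)` is increasing in `T`.
-/

theorem strictConvexOn_tan : StrictConvexOn ℝ (Ico 0 (π / 2)) tan := by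
  refine StrictMonoOn.strictConvexOn_of_deriv (convex_Ico _ _) ?_ ?_
  · exact continuousOn_tan.mono fun x hx =>
      (cos_pos_of_mem_Ioo ⟨by linarith [hx.1, pi_pos], hx.2⟩).ne'
  · rw [interior_Ico]
    intro x hx y hy hxy
    have hcx : 0 < cos x := cos_pos_of_mem_Ioo ⟨by linarith [hx.1, pi_pos], hx.2⟩
    have hcy : 0 < cos y := cos_pos_of_mem_Ioo ⟨by linarith [hy.1, pi_pos], hy.2⟩
    rw [(hasDerivAt_tan hcx.ne').deriv, (hasDerivAt_tan hcy.ne').deriv]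
    have := cos_lt_cos_of_nonneg_of_le_pi_div_two hx.1.le hy.2.le hxy
    gcongr

theorem tan_div_lt_tan_div {x y : ℝ} (hx : 0 < x) (hxy : x < y) (hy : y < π / 2) :
    tan x / x < tan y / y := by
  simpa using strictConvexOn_tan.secant_strict_mono (a := 0) ⟨le_rfl, by positivity⟩
    ⟨hx.le, hxy.trans hy⟩ ⟨(hx.trans hxy).le, hy⟩ hx.ne' (hx.trans hxy).ne' hxy

theorem hasSum_artanh {x : ℝ} (hx : |x| < 1) :
    HasSum (fun k : ℕ => x ^ (2 * k + 1) / (2 * k + 1)) (artanh x) := by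
  have hx' := abs_lt.1 hx
  rw [artanh_eq_half_log ⟨hx'.1.le, hx'.2.le⟩,
    log_div (by linarith) (by linarith)]
  have hterm : (fun k : ℕ => x ^ (2 * k + 1) / (2 * k + 1)) =
      fun k : ℕ => 1 / 2 * (2 * (1 / (2 * k + 1)) * x ^ (2 * k + 1)) := by
    ext k
    ring
  rw [hterm]
  exact (hasSum_log_sub_log_of_abs_lt_one hx).mul_left (1 / 2)

theorem artanh_div_le_artanh_div {s t : ℝ} (hs : 0 < s) (hst : s ≤ t) (ht : t < 1) :
    artanh s / s ≤ artanh t / t := by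
  have ht0 : 0 < t := hs.trans_le hst
  have hterm : ∀ {x : ℝ}, x ≠ 0 → ∀ k : ℕ,
      x ^ (2 * k + 1) / (2 * k + 1) / x = x ^ (2 * k) / (2 * k + 1) := by
    intro x hx k
    field_simp
    ring
  refine hasSum_le (fun k => ?_)
    ((hasSum_artanh (by rw [abs_lt]; constructor <;> linarith)).div_const s)
    ((hasSum_artanh (by rw [abs_lt]; constructor <;> linarith)).div_const t)
  rw [hterm hs.ne', hterm ht0.ne']
  gcongr

theorem cosh_two_mul_artanh {t : ℝ} (ht : t ∈ Ioo (-1) 1) :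
    cosh (2 * artanh t) = (1 + t ^ 2) / (1 - t ^ 2) := by
  have h : 0 < 1 - t ^ 2 := by nlinarith [ht.1, ht.2]
  rw [cosh_two_mul, cosh_artanh ht, sinh_artanh ht, div_pow, div_pow, sq_sqrt h.le]
  field_simp

theorem arcosh_one_add_sq_div_one_sub_sq {t : ℝ} (h0 : 0 ≤ t) (h1 : t < 1) :
    Real.arcosh ((1 + t ^ 2) / (1 - t ^ 2)) = 2 * artanh t := by
  rw [← cosh_two_mul_artanh ⟨by linarith, h1⟩,
    arcosh_cosh (mul_nonneg zero_le_two (artanh_nonneg h0))]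

theorem cos_sub_div_cos_add {u v : ℝ} (hu : cos u ≠ 0) (hv : cos v ≠ 0) :
    cos (u - v) / cos (u + v) = (1 + tan u * tan v) / (1 - tan u * tan v) := by
  rw [← mul_div_mul_left (1 + tan u * tan v) _ (mul_ne_zero hu hv), cos_sub, cos_add,
    tan_eq_sin_div_cos, tan_eq_sin_div_cos]
  congr 1 <;> field_simp

theorem sqrt_tan_mul_tan_lt_one {u v : ℝ} (hu : 0 ≤ u) (hv : 0 ≤ v) (huv : u + v < π / 2) :
    √(tan u * tan v) < 1 := by
  have hcu : 0 < cos u := cos_pos_of_mem_Ioo ⟨by linarith [pi_pos], by linarith⟩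
  have hcv : 0 < cos v := cos_pos_of_mem_Ioo ⟨by linarith [pi_pos], by linarith⟩
  have hcuv : 0 < cos (u + v) := cos_pos_of_mem_Ioo ⟨by linarith [pi_pos], huv⟩
  rw [cos_add] at hcuv
  rw [sqrt_lt' one_pos, one_pow, tan_eq_sin_div_cos, tan_eq_sin_div_cos, div_mul_div_comm,
    div_lt_one (mul_pos hcu hcv)]
  linarith

theorem arcosh_cos_sub_div_cos_add {u v : ℝ} (hu : 0 ≤ u) (hv : 0 ≤ v) (huv : u + v < π / 2) :
    Real.arcosh (cos (u - v) / cos (u + v)) = 2 * artanh √(tan u * tan v) := by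
  have hcu : 0 < cos u := cos_pos_of_mem_Ioo ⟨by linarith [pi_pos], by linarith⟩
  have hcv : 0 < cos v := cos_pos_of_mem_Ioo ⟨by linarith [pi_pos], by linarith⟩
  have hs0 : 0 ≤ tan u * tan v := mul_nonneg (tan_nonneg_of_nonneg_of_le_pi_div_two hu
    (by linarith)) (tan_nonneg_of_nonneg_of_le_pi_div_two hv (by linarith))
  conv_lhs => rw [cos_sub_div_cos_add hcu.ne' hcv.ne', ← sq_sqrt hs0]
  exact arcosh_one_add_sq_div_one_sub_sq (sqrt_nonneg _) (sqrt_tan_mul_tan_lt_one hu hv huv)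

theorem tan_mul_div_lt_tan_mul_div {c x y : ℝ} (hc : 0 < c) (hx : 0 < x) (hxy : x < y)
    (hy : c * y < π / 2) : tan (c * x) / x < tan (c * y) / y := by
  have h := tan_div_lt_tan_div (mul_pos hc hx) (mul_lt_mul_of_pos_left hxy hc) hy
  rwa [mul_comm c x, mul_comm c y, ← div_div, ← div_div, div_lt_div_iff_of_pos_right hc,
    mul_comm x c, mul_comm y c] at h

theorem sqrt_tan_mul_tan_div_lt {c d x y : ℝ} (hc : 0 < c) (hd : 0 < d) (hx : 0 < x)
    (hxy : x < y) (hcy : c * y < π / 2) (hdy : d * y < π / 2) :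
    √(tan (c * x) * tan (d * x)) / x < √(tan (c * y) * tan (d * y)) / y := by
  have hsplit : ∀ z : ℝ, 0 < z →
      √(tan (c * z) * tan (d * z)) / z = √(tan (c * z) / z * (tan (d * z) / z)) := by
    intro z hz
    rw [div_mul_div_comm, sqrt_div' _ (by positivity), sqrt_mul_self hz.le]
  have htan : ∀ e : ℝ, 0 < e → e * y < π / 2 → 0 < tan (e * x) / x := fun e he hey =>
    div_pos (tan_pos_of_pos_of_lt_pi_div_two (by positivity)
      (by nlinarith [mul_lt_mul_of_pos_left hxy he])) hx
  rw [hsplit x hx, hsplit y (hx.trans hxy)]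
  exact sqrt_lt_sqrt (mul_pos (htan c hc hcy) (htan d hd hdy)).le
    (mul_lt_mul'' (tan_mul_div_lt_tan_mul_div hc hx hxy hcy)
      (tan_mul_div_lt_tan_mul_div hd hx hxy hdy) (htan c hc hcy).le (htan d hd hdy).le)

theorem artanh_sqrt_tan_mul_tan_div_lt {c d x y : ℝ} (hc : 0 < c) (hd : 0 < d) (hx : 0 < x)
    (hxy : x < y) (hy : (c + d) * y < π / 2) :
    artanh √(tan (c * x) * tan (d * x)) / x < artanh √(tan (c * y) * tan (d * y)) / y := by
  have hy0 : 0 < y := hx.trans hxy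
  have hcy : c * y < π / 2 := by nlinarith
  have hdy : d * y < π / 2 := by nlinarith
  set S : ℝ → ℝ := fun z => √(tan (c * z) * tan (d * z))
  have hratio : S x / x < S y / y := sqrt_tan_mul_tan_div_lt hc hd hx hxy hcy hdy
  have hSx : 0 < S x := sqrt_pos.2 (mul_pos
    (tan_pos_of_pos_of_lt_pi_div_two (by positivity) (by nlinarith))
    (tan_pos_of_pos_of_lt_pi_div_two (by positivity) (by nlinarith)))
  have hSxy : S x < S y := by
    have := (div_lt_div_iff₀ hx hy0).1 hratio
    nlinarith
  have hSy : S y < 1 := sqrt_tan_mul_tan_lt_one (by positivity) (by positivity) (by linarith)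
  calc artanh (S x) / x = artanh (S x) / S x * (S x / x) := by field_simp
    _ ≤ artanh (S y) / S y * (S x / x) :=
      mul_le_mul_of_nonneg_right (artanh_div_le_artanh_div hSx hSxy.le hSy) (by positivity)
    _ < artanh (S y) / S y * (S y / y) :=
      mul_lt_mul_of_pos_left hratio (div_pos (artanh_pos ⟨hSx.trans hSxy, hSy⟩) (hSx.trans hSxy))
    _ = artanh (S y) / y := by field_simp [(hSx.trans hSxy).ne']

theorem artanh_sqrt_tan_mul_tan_lt {u₁ u₂ v₁ v₂ : ℝ} (hu₁ : 0 ≤ u₁) (hv₁ : 0 ≤ v₁)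
    (hu : u₁ < u₂) (hv : v₁ < v₂) (h₂ : u₂ + v₂ < π / 2) :
    artanh √(tan u₁ * tan v₁) < artanh √(tan u₂ * tan v₂) := by
  have htan : ∀ {w₁ w₂ : ℝ}, 0 ≤ w₁ → w₁ < w₂ → w₂ < π / 2 → 0 ≤ tan w₁ ∧ tan w₁ < tan w₂ :=
    fun h₀ h h' => ⟨tan_nonneg_of_nonneg_of_le_pi_div_two h₀ (by linarith),
      tan_lt_tan_of_lt_of_lt_pi_div_two (by linarith [pi_pos]) h' h⟩
  obtain ⟨htu₁, htu⟩ := htan hu₁ hu (by linarith)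
  obtain ⟨htv₁, htv⟩ := htan hv₁ hv (by linarith)
  refine artanh_lt_artanh (by linarith [sqrt_nonneg (tan u₁ * tan v₁)])
    (sqrt_tan_mul_tan_lt_one (by linarith) (by linarith) h₂) ?_
  exact sqrt_lt_sqrt (mul_nonneg htu₁ htv₁) (mul_lt_mul'' htu htv htu₁ htv₁)

theorem arcosh_eq_real_arcosh : _root_.arcosh = Real.arcosh := rfl

theorem Perim_eq_artanh {n a : ℝ} (hn : 0 < n) (ha : 0 ≤ a) (han : a < (n - 2) * π) :
    Perim n a = 4 * n * artanh √(tan ((π + a / 4) / n) * tan (a / 4 / n)) := by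
  have hsin : ((n - 2) * π - a) / (2 * n) = π / 2 - ((π + a / 4) / n + a / 4 / n) := by
    field_simp
    ring
  have hcos : π / n = (π + a / 4) / n - a / 4 / n := by ring
  have hsum : (π + a / 4) / n + a / 4 / n < π / 2 := by
    rw [← add_div, div_lt_iff₀ hn]
    linarith
  rw [Perim, arcosh_eq_real_arcosh, hsin, sin_pi_div_two_sub, hcos,
    arcosh_cos_sub_div_cos_add (by positivity) (by positivity) hsum]
  ring

theorem Perim_lt_Perim_of_lt_left {a n₁ n₂ : ℝ} (ha : 0 < a) (hn₁ : 2 < n₁)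
    (ha₁ : a < (n₁ - 2) * π) (hn : n₁ < n₂) : Perim n₂ a < Perim n₁ a := by
  have hn₁0 : 0 < n₁ := by linarith
  have ha₂ : a < (n₂ - 2) * π := by nlinarith [pi_pos]
  have hangle : (π + a / 4 + a / 4) * n₁⁻¹ < π / 2 := by
    rw [← div_eq_mul_inv, div_lt_iff₀ hn₁0]
    linarith
  have key := artanh_sqrt_tan_mul_tan_div_lt (by positivity) (by positivity)
    (inv_pos.2 (hn₁0.trans hn)) (inv_strictAnti₀ hn₁0 hn) hangle
  simp only [← div_eq_mul_inv, div_inv_eq_mul] at key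
  rw [Perim_eq_artanh (hn₁0.trans hn) ha.le ha₂, Perim_eq_artanh hn₁0 ha.le ha₁]
  linarith

theorem Perim_lt_Perim_of_lt_right {n a₁ a₂ : ℝ} (hn : 2 < n) (ha₁ : 0 ≤ a₁) (ha : a₁ < a₂)
    (ha₂ : a₂ < (n - 2) * π) : Perim n a₁ < Perim n a₂ := by
  have hn0 : 0 < n := by linarith
  have hsum : (π + a₂ / 4) / n + a₂ / 4 / n < π / 2 := by
    rw [← add_div, div_lt_iff₀ hn0]
    linarith
  rw [Perim_eq_artanh hn0 ha₁ (ha.trans ha₂), Perim_eq_artanh hn0 (ha₁.trans ha.le) ha₂]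
  refine mul_lt_mul_of_pos_left (artanh_sqrt_tan_mul_tan_lt (by positivity) (by positivity)
    ?_ ?_ hsum) (by positivity) <;> gcongr

theorem stmt_5 :
    (∀ a : ℝ, 0 < a → ∀ n₁ n₂ : ℝ, 2 < n₁ → a < (n₁ - 2) * π → n₁ < n₂ →
      Perim n₂ a < Perim n₁ a) ∧
    (∀ n : ℝ, 2 < n → ∀ a₁ a₂ : ℝ, 0 ≤ a₁ → a₁ < a₂ → a₂ < (n - 2) * π →
      Perim n a₁ < Perim n a₂) :=
  ⟨fun _ ha _ _ hn₁ ha₁ hn => Perim_lt_Perim_of_lt_left ha hn₁ ha₁ hn,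
    fun _ hn _ _ ha₁ ha ha₂ => Perim_lt_Perim_of_lt_right hn ha₁ ha ha₂⟩
end

section
/- For each integer n ≥ 4, the function g_n(x) = Perim(n,x) − Perim(n+1,x) is monotonically increasing on [0, (n−2)π), where Perim(n,a) = 2n·arcosh(cos(π/n)/sin(((n−2)π − a)/(2n))) and Perim(n,0) = 0. -/
open Real

lemma hasDerivAt_arcosh {x : ℝ} (hx : 1 < x) :
    HasDerivAt _root_.arcosh (1 / Real.sqrt (x ^ 2 - 1)) x := by
  have h1 : (0:ℝ) < x ^ 2 - 1 := by nlinarith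
  have hs : 0 < Real.sqrt (x ^ 2 - 1) := Real.sqrt_pos.2 h1
  have hsq : HasDerivAt (fun y : ℝ => y ^ 2 - 1) (2 * x) x := by
    simpa using (hasDerivAt_pow 2 x).sub_const 1
  have h2 : HasDerivAt (fun y : ℝ => Real.sqrt (y ^ 2 - 1))
      (1 / (2 * Real.sqrt (x ^ 2 - 1)) * (2 * x)) x :=
    (Real.hasDerivAt_sqrt (ne_of_gt h1)).comp x hsq
  have h3 : HasDerivAt (fun y : ℝ => y + Real.sqrt (y ^ 2 - 1))
      (1 + 1 / (2 * Real.sqrt (x ^ 2 - 1)) * (2 * x)) x := (hasDerivAt_id x).add h2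
  have hpos : 0 < x + Real.sqrt (x ^ 2 - 1) := by positivity
  have h4 := h3.log (ne_of_gt hpos)
  have hss : Real.sqrt (x ^ 2 - 1) ^ 2 = x ^ 2 - 1 := Real.sq_sqrt h1.le
  convert h4 using 1
  · rfl
  field_simp
  nlinarith [hs, hss]

noncomputable def Dm (m x : ℝ) : ℝ :=
  cos (π / m) * cos (((m - 2) * π - x) / (2 * m)) /
    (sin (((m - 2) * π - x) / (2 * m)) *
      Real.sqrt (cos (π / m) ^ 2 - sin (((m - 2) * π - x) / (2 * m)) ^ 2))

lemma theta_facts (m x : ℝ) (hm : 3 ≤ m) (hx : 0 < x) (hx2 : x < (m - 2) * π) :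
    0 < ((m - 2) * π - x) / (2 * m) ∧ ((m - 2) * π - x) / (2 * m) < π / 2 - π / m := by
  have hπ := pi_pos
  have hm0 : (0:ℝ) < m := by linarith
  constructor
  · apply div_pos (by linarith) (by linarith)
  · rw [div_lt_iff₀ (by linarith)]
    have : (π / 2 - π / m) * (2 * m) = (m - 2) * π := by field_simp
    rw [this]; linarith

lemma hasDerivAt_Perim (m x : ℝ) (hm : 3 ≤ m) (hx : 0 < x) (hx2 : x < (m - 2) * π) :
    HasDerivAt (Perim m) (Dm m x) x := by
  have hπ := pi_pos
  have hm0 : (0:ℝ) < m := by linarith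
  set θ := ((m - 2) * π - x) / (2 * m) with hθdef
  obtain ⟨hθ0, hθlt⟩ := theta_facts m x hm hx hx2
  have hθhalf : θ < π / 2 := by
    have : 0 < π / m := by positivity
    linarith
  have hπm : 0 < π / m := by positivity
  have hπm2 : π / m < π / 2 := by
    rw [div_lt_div_iff₀ hm0 two_pos]; nlinarith
  have hc : 0 < cos (π / m) := cos_pos_of_mem_Ioo ⟨by linarith, hπm2⟩
  have hσ : 0 < sin θ := sin_pos_of_pos_of_lt_pi hθ0 (by linarith)
  have hσc : sin θ < cos (π / m) := by
    have : cos (π / m) = sin (π / 2 - π / m) := (sin_pi_div_two_sub _).symm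
    rw [this]
    exact sin_lt_sin_of_lt_of_le_pi_div_two (by linarith) (by linarith) hθlt
  have hcθ : 0 < cos θ := cos_pos_of_mem_Ioo ⟨by linarith, hθhalf⟩
  have hu1 : 1 < cos (π / m) / sin θ := (one_lt_div hσ).2 hσc
  -- derivative of inner affine map
  have hθ' : HasDerivAt (fun y : ℝ => ((m - 2) * π - y) / (2 * m)) (-1 / (2 * m)) x := by
    have h := ((hasDerivAt_id x).const_sub ((m - 2) * π)).div_const (2 * m)
    simpa using h
  have hsin : HasDerivAt (fun y : ℝ => sin (((m - 2) * π - y) / (2 * m)))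
      (cos θ * (-1 / (2 * m))) x := by
    have := (Real.hasDerivAt_sin θ).comp x hθ'; exact this
  have hu : HasDerivAt (fun y : ℝ => cos (π / m) / sin (((m - 2) * π - y) / (2 * m)))
      ((0 * sin θ - cos (π / m) * (cos θ * (-1 / (2 * m)))) / (sin θ) ^ 2) x :=
    (hasDerivAt_const x (cos (π / m))).div hsin (ne_of_gt hσ)
  have harc := (_root_.hasDerivAt_arcosh hu1).comp x hu
  have hP := harc.const_mul (2 * m)
  have hfun : (fun y : ℝ => 2 * m *
      _root_.arcosh (cos (π / m) / sin (((m - 2) * π - y) / (2 * m)))) = Perim m := by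
    funext y; simp [Perim]
  have hP2 : HasDerivAt (Perim m)
      (2 * m * (1 / √((cos (π / m) / sin θ) ^ 2 - 1) *
        ((0 * sin θ - cos (π / m) * (cos θ * (-1 / (2 * m)))) / sin θ ^ 2))) x := by
    rw [← hfun]
    exact hP
  convert hP2 using 1
  -- value simplification
  have hsq : (cos (π / m) / sin θ) ^ 2 - 1 = (cos (π / m) ^ 2 - sin θ ^ 2) / sin θ ^ 2 := by
    field_simp
  have hposd : 0 < cos (π / m) ^ 2 - sin θ ^ 2 := by nlinarith
  have hsqrt : Real.sqrt ((cos (π / m) / sin θ) ^ 2 - 1)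
      = Real.sqrt (cos (π / m) ^ 2 - sin θ ^ 2) / sin θ := by
    rw [hsq, Real.sqrt_div hposd.le, Real.sqrt_sq hσ.le]
  have hsr : 0 < Real.sqrt (cos (π / m) ^ 2 - sin θ ^ 2) := Real.sqrt_pos.2 hposd
  rw [Dm, ← hθdef, hsqrt]
  field_simp
  ring

-- k(t) = sin(l t) cos t - l cos(l t) sin t is nonneg on [0, π/l]
lemma keyB_inner (l s : ℝ) (hl : 1 ≤ l) (hs : 0 ≤ s) (h2 : l * s ≤ π) :
    l * cos (l * s) * sin s ≤ sin (l * s) * cos s := by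
  set k : ℝ → ℝ := fun t => sin (l * t) * cos t - l * cos (l * t) * sin t with hk
  have hder : ∀ t : ℝ, HasDerivAt k ((l ^ 2 - 1) * sin (l * t) * sin t) t := by
    intro t
    have h1 : HasDerivAt (fun t : ℝ => l * t) l t := by
      simpa using (hasDerivAt_id t).const_mul l
    have hsl : HasDerivAt (fun t : ℝ => sin (l * t)) (cos (l * t) * l) t :=
      (Real.hasDerivAt_sin (l * t)).comp t h1
    have hcl : HasDerivAt (fun t : ℝ => cos (l * t)) (-sin (l * t) * l) t :=
      (Real.hasDerivAt_cos (l * t)).comp t h1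
    have h3 : HasDerivAt (fun t : ℝ => sin (l * t) * cos t)
        (cos (l * t) * l * cos t + sin (l * t) * (-sin t)) t :=
      hsl.mul (Real.hasDerivAt_cos t)
    have h4 : HasDerivAt (fun t : ℝ => l * cos (l * t) * sin t)
        (l * (-sin (l * t) * l) * sin t + l * cos (l * t) * cos t) t :=
      ((hcl.const_mul l).mul (Real.hasDerivAt_sin t))
    have := h3.sub h4
    exact this.congr_deriv (by ring)
  have hmono : MonotoneOn k (Set.Icc 0 s) := by
    apply monotoneOn_of_deriv_nonneg (convex_Icc 0 s)
    · exact fun t _ => (hder t).continuousAt.continuousWithinAt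
    · exact fun t _ => (hder t).differentiableAt.differentiableWithinAt
    · intro t ht
      rw [interior_Icc] at ht
      rw [(hder t).deriv]
      have hlt : 0 ≤ sin (l * t) := by
        apply sin_nonneg_of_nonneg_of_le_pi
        · nlinarith [ht.1]
        · nlinarith [ht.2, ht.1]
      have hst : 0 ≤ sin t := by
        apply sin_nonneg_of_nonneg_of_le_pi ht.1.le
        nlinarith [ht.2]
      have hl2 : (0:ℝ) ≤ l ^ 2 - 1 := by nlinarith
      exact mul_nonneg (mul_nonneg hl2 hlt) hst
  have h0 : k 0 ≤ k s := hmono (Set.left_mem_Icc.2 hs) (Set.right_mem_Icc.2 hs) hs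
  simp [hk] at h0
  linarith

lemma keyA (l s₁ s₂ : ℝ) (hl : 1 ≤ l) (h0 : 0 < s₁) (h12 : s₁ ≤ s₂) (h2 : l * s₂ < π / 2) :
    cos (l * s₂) / cos s₂ ≤ cos (l * s₁) / cos s₁ := by
  have hπ := pi_pos
  have hanti : AntitoneOn (fun s => cos (l * s) / cos s) (Set.Icc s₁ s₂) := by
    have hcos : ∀ s ∈ Set.Icc s₁ s₂, 0 < cos s := by
      intro s hs
      apply cos_pos_of_mem_Ioo
      constructor
      · linarith [hs.1]
      · nlinarith [hs.2]
    have hder : ∀ s ∈ Set.Icc s₁ s₂, HasDerivAt (fun s => cos (l * s) / cos s)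
        ((-sin (l * s) * l * cos s - cos (l * s) * (-sin s)) / cos s ^ 2) s := by
      intro s hs
      have h1 : HasDerivAt (fun t : ℝ => l * t) l s := by
        simpa using (hasDerivAt_id s).const_mul l
      exact ((Real.hasDerivAt_cos (l * s)).comp s h1).div (Real.hasDerivAt_cos s)
        (ne_of_gt (hcos s hs))
    apply antitoneOn_of_deriv_nonpos (convex_Icc s₁ s₂)
    · exact fun s hs => (hder s hs).continuousAt.continuousWithinAt
    · intro s hs
      rw [interior_Icc] at hs
      exact (hder s (Set.mem_Icc_of_Ioo hs)).differentiableAt.differentiableWithinAt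
    · intro s hs
      rw [interior_Icc] at hs
      have hs' := Set.mem_Icc_of_Ioo hs
      rw [(hder s hs').deriv]
      apply div_nonpos_of_nonpos_of_nonneg _ (sq_nonneg _)
      have h3 : 0 ≤ sin (l * s - s) := by
        apply sin_nonneg_of_nonneg_of_le_pi
        · nlinarith [hs'.1]
        · nlinarith [hs'.2]
      rw [sin_sub] at h3
      have h4 : 0 ≤ sin (l * s) := by
        apply sin_nonneg_of_nonneg_of_le_pi
        · nlinarith [hs'.1]
        · nlinarith [hs'.2]
      have h5 : 0 < cos s := hcos s hs'
      nlinarith [mul_nonneg h4 h5.le]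
  exact hanti (Set.left_mem_Icc.2 h12) (Set.right_mem_Icc.2 h12) h12

lemma keyB (l s₁ s₂ : ℝ) (hl : 1 ≤ l) (h0 : 0 < s₁) (h12 : s₁ ≤ s₂) (h2 : l * s₂ < π / 2) :
    sin s₁ / sin (l * s₁) ≤ sin s₂ / sin (l * s₂) := by
  have hπ := pi_pos
  have hmono : MonotoneOn (fun s => sin s / sin (l * s)) (Set.Icc s₁ s₂) := by
    have hsl : ∀ s ∈ Set.Icc s₁ s₂, 0 < sin (l * s) := by
      intro s hs
      apply sin_pos_of_pos_of_lt_pi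
      · nlinarith [hs.1]
      · nlinarith [hs.2]
    have hder : ∀ s ∈ Set.Icc s₁ s₂, HasDerivAt (fun s => sin s / sin (l * s))
        ((cos s * sin (l * s) - sin s * (cos (l * s) * l)) / sin (l * s) ^ 2) s := by
      intro s hs
      have h1 : HasDerivAt (fun t : ℝ => l * t) l s := by
        simpa using (hasDerivAt_id s).const_mul l
      exact (Real.hasDerivAt_sin s).div ((Real.hasDerivAt_sin (l * s)).comp s h1)
        (ne_of_gt (hsl s hs))
    apply monotoneOn_of_deriv_nonneg (convex_Icc s₁ s₂)
    · exact fun s hs => (hder s hs).continuousAt.continuousWithinAt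
    · intro s hs
      rw [interior_Icc] at hs
      exact (hder s (Set.mem_Icc_of_Ioo hs)).differentiableAt.differentiableWithinAt
    · intro s hs
      rw [interior_Icc] at hs
      have hs' := Set.mem_Icc_of_Ioo hs
      rw [(hder s hs').deriv]
      apply div_nonneg _ (sq_nonneg _)
      have := keyB_inner l s hl (by linarith [hs'.1]) (by nlinarith [hs'.2])
      linarith
  exact hmono (Set.left_mem_Icc.2 h12) (Set.right_mem_Icc.2 h12) h12

lemma keyH (l s₁ s₂ : ℝ) (hl : 1 < l) (h0 : 0 < s₁) (h12 : s₁ ≤ s₂) (h2 : l * s₂ < π / 2) :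
    (cos (l * s₂) / cos s₂) ^ 2 * (1 - (sin s₂ / sin (l * s₂)) ^ 2) ≤
    (cos (l * s₁) / cos s₁) ^ 2 * (1 - (sin s₁ / sin (l * s₁)) ^ 2) := by
  have hπ := pi_pos
  have hA := keyA l s₁ s₂ hl.le h0 h12 h2
  have hB := keyB l s₁ s₂ hl.le h0 h12 h2
  have hc2 : 0 ≤ cos (l * s₂) / cos s₂ := by
    apply div_nonneg
    · apply cos_nonneg_of_mem_Icc; constructor <;> nlinarith
    · apply cos_nonneg_of_mem_Icc; constructor <;> nlinarith
  -- sin s₂ < sin (l * s₂)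
  have hr2 : sin s₂ / sin (l * s₂) ≤ 1 := by
    have hsl : 0 < sin (l * s₂) := sin_pos_of_pos_of_lt_pi (by nlinarith) (by nlinarith)
    rw [div_le_one hsl]
    apply sin_le_sin_of_le_of_le_pi_div_two (by nlinarith) h2.le
    nlinarith
  have hr2' : 0 ≤ sin s₂ / sin (l * s₂) := by
    apply div_nonneg
    · apply sin_nonneg_of_nonneg_of_le_pi (by linarith) (by nlinarith)
    · apply sin_nonneg_of_nonneg_of_le_pi (by nlinarith) (by nlinarith)
  have h1 : 0 ≤ 1 - (sin s₂ / sin (l * s₂)) ^ 2 := by nlinarith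
  have h2' : 1 - (sin s₂ / sin (l * s₂)) ^ 2 ≤ 1 - (sin s₁ / sin (l * s₁)) ^ 2 := by
    have h0' : 0 ≤ sin s₁ / sin (l * s₁) := by
      apply div_nonneg
      · apply sin_nonneg_of_nonneg_of_le_pi (by linarith) (by nlinarith)
      · apply sin_nonneg_of_nonneg_of_le_pi (by nlinarith) (by nlinarith)
    nlinarith
  have hA2 : (cos (l * s₂) / cos s₂) ^ 2 ≤ (cos (l * s₁) / cos s₁) ^ 2 := by
    nlinarith
  apply mul_le_mul hA2 h2' h1 (sq_nonneg _)
lemma D_pos_inv (l s : ℝ) (h0 : 0 < s) (hl : 1 < l) (h2 : l * s < π / 2) :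
    0 < cos s * sin (l * s) / (cos (l * s) * Real.sqrt (cos s ^ 2 - cos (l * s) ^ 2)) ∧
    (cos (l * s) / cos s) ^ 2 * (1 - (sin s / sin (l * s)) ^ 2) *
      (cos s * sin (l * s) / (cos (l * s) * Real.sqrt (cos s ^ 2 - cos (l * s) ^ 2))) ^ 2 = 1 := by
  have hπ := pi_pos
  have hs2 : s < l * s := by nlinarith
  have hcs : 0 < cos s := cos_pos_of_mem_Ioo ⟨by linarith, by linarith⟩
  have hcls : 0 < cos (l * s) := cos_pos_of_mem_Ioo ⟨by linarith, h2⟩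
  have hss : 0 < sin s := sin_pos_of_pos_of_lt_pi h0 (by linarith)
  have hsls : 0 < sin (l * s) := sin_pos_of_pos_of_lt_pi (by linarith) (by linarith)
  have hclt : cos (l * s) < cos s := by
    apply cos_lt_cos_of_nonneg_of_le_pi h0.le (by linarith) hs2
  have hslt : sin s < sin (l * s) :=
    sin_lt_sin_of_lt_of_le_pi_div_two (by linarith) h2.le hs2
  have hd : 0 < cos s ^ 2 - cos (l * s) ^ 2 := by nlinarith
  have hsr : 0 < Real.sqrt (cos s ^ 2 - cos (l * s) ^ 2) := Real.sqrt_pos.2 hd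
  have hsr2 : Real.sqrt (cos s ^ 2 - cos (l * s) ^ 2) ^ 2 = cos s ^ 2 - cos (l * s) ^ 2 :=
    Real.sq_sqrt hd.le
  constructor
  · positivity
  · have hpyth1 : sin s ^ 2 = 1 - cos s ^ 2 := by nlinarith [sin_sq_add_cos_sq s]
    have hpyth2 : sin (l * s) ^ 2 = 1 - cos (l * s) ^ 2 := by
      nlinarith [sin_sq_add_cos_sq (l * s)]
    have key : sin (l * s) ^ 2 - sin s ^ 2 = cos s ^ 2 - cos (l * s) ^ 2 := by linarith
    field_simp
    rw [hsr2]
    linear_combination key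

lemma Dm_eq (m x : ℝ) (hm : 0 < m) :
    Dm m x = cos (π / m) * sin ((x + 2 * π) / (2 * π) * (π / m)) /
      (cos ((x + 2 * π) / (2 * π) * (π / m)) *
        Real.sqrt (cos (π / m) ^ 2 - cos ((x + 2 * π) / (2 * π) * (π / m)) ^ 2)) := by
  have hπ := pi_pos
  have hθeq : ((m - 2) * π - x) / (2 * m) = π / 2 - (x + 2 * π) / (2 * π) * (π / m) := by
    field_simp
    ring
  rw [Dm, hθeq, sin_pi_div_two_sub, cos_pi_div_two_sub]

lemma continuousOn_Perim (m : ℝ) (hm : 3 ≤ m) {b : ℝ} (hb : b ≤ (m - 2) * π) :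
    ContinuousOn (Perim m) (Set.Ico 0 b) := by
  have hπ := pi_pos
  have hm0 : (0:ℝ) < m := by linarith
  have hπm2 : π / m < π / 2 := by
    rw [div_lt_div_iff₀ hm0 two_pos]; nlinarith
  have hπmpos : 0 < π / m := by positivity
  have hc : 0 < cos (π / m) := cos_pos_of_mem_Ioo ⟨by linarith, hπm2⟩
  have hθmem : ∀ x ∈ Set.Ico (0:ℝ) b, 0 < ((m - 2) * π - x) / (2 * m) ∧
      ((m - 2) * π - x) / (2 * m) ≤ π / 2 - π / m := by
    intro x hx
    have h1 : x < (m - 2) * π := lt_of_lt_of_le hx.2 hb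
    constructor
    · apply div_pos (by linarith) (by linarith)
    · rw [div_le_iff₀ (by linarith)]
      have : (π / 2 - π / m) * (2 * m) = (m - 2) * π := by field_simp
      rw [this]; linarith [hx.1]
  have hσ : ∀ x ∈ Set.Ico (0:ℝ) b, 0 < sin (((m - 2) * π - x) / (2 * m)) := by
    intro x hx
    obtain ⟨h1, h2⟩ := hθmem x hx
    apply sin_pos_of_pos_of_lt_pi h1
    have : 0 < π / m := by positivity
    linarith
  have hu1 : ∀ x ∈ Set.Ico (0:ℝ) b,
      1 ≤ cos (π / m) / sin (((m - 2) * π - x) / (2 * m)) := by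
    intro x hx
    obtain ⟨h1, h2⟩ := hθmem x hx
    rw [le_div_iff₀ (hσ x hx), one_mul]
    calc sin (((m - 2) * π - x) / (2 * m)) ≤ sin (π / 2 - π / m) := by
          apply sin_le_sin_of_le_of_le_pi_div_two (by linarith) (by linarith) h2
      _ = cos (π / m) := sin_pi_div_two_sub _
  have hucont : ContinuousOn (fun x : ℝ => cos (π / m) / sin (((m - 2) * π - x) / (2 * m)))
      (Set.Ico 0 b) := by
    apply ContinuousOn.div continuousOn_const
    · apply Continuous.continuousOn; continuity
    · intro x hx; exact ne_of_gt (hσ x hx)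
  have hPeq : Perim m = fun x : ℝ => 2 * m * Real.log
      ((cos (π / m) / sin (((m - 2) * π - x) / (2 * m))) +
        Real.sqrt ((cos (π / m) / sin (((m - 2) * π - x) / (2 * m))) ^ 2 - 1)) := by
    funext x; simp [Perim, _root_.arcosh]
  rw [hPeq]
  have hlog : ContinuousOn (fun x : ℝ => Real.log
      ((cos (π / m) / sin (((m - 2) * π - x) / (2 * m))) +
        Real.sqrt ((cos (π / m) / sin (((m - 2) * π - x) / (2 * m))) ^ 2 - 1)))
      (Set.Ico 0 b) := by
    apply ContinuousOn.log
      (hucont.add (((hucont.pow 2).sub continuousOn_const).sqrt))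
    intro x hx
    have h1 := hu1 x hx
    have h2 : 0 ≤ Real.sqrt ((cos (π / m) / sin (((m - 2) * π - x) / (2 * m))) ^ 2 - 1) :=
      Real.sqrt_nonneg _
    exact ne_of_gt (by dsimp only [Pi.add_apply, Pi.sub_apply, Pi.pow_apply]; linarith)
  exact continuousOn_const.mul hlog

lemma Dcompare (n : ℕ) (hn : 4 ≤ n) (x : ℝ) (hx : 0 < x) (hx2 : x < ((n:ℝ) - 2) * π) :
    Dm ((n:ℝ) + 1) x ≤ Dm (n:ℝ) x := by
  have hπ := pi_pos
  have hn4 : (4:ℝ) ≤ (n:ℝ) := by exact_mod_cast hn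
  set l : ℝ := (x + 2 * π) / (2 * π) with hl_def
  have hl : 1 < l := by
    rw [hl_def, lt_div_iff₀ (by linarith)]
    linarith
  have hs2pos : 0 < π / (n:ℝ) := by apply div_pos hπ; linarith
  have hs1pos : 0 < π / ((n:ℝ) + 1) := by apply div_pos hπ; linarith
  have hs12 : π / ((n:ℝ) + 1) ≤ π / (n:ℝ) := by
    apply div_le_div_of_nonneg_left hπ.le (by linarith) (by linarith)
  have hls2 : l * (π / (n:ℝ)) = (x + 2 * π) / (2 * (n:ℝ)) := by
    rw [hl_def]; field_simp
  have hls1 : l * (π / ((n:ℝ) + 1)) = (x + 2 * π) / (2 * ((n:ℝ) + 1)) := by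
    rw [hl_def]; field_simp
  have hbound : l * (π / (n:ℝ)) < π / 2 := by
    rw [hls2, div_lt_div_iff₀ (by linarith) two_pos]
    nlinarith
  have hbound1 : l * (π / ((n:ℝ) + 1)) < π / 2 :=
    lt_of_le_of_lt (by nlinarith [hl, hs1pos, hs2pos]) hbound
  have hH := keyH l (π / ((n:ℝ) + 1)) (π / (n:ℝ)) hl hs1pos hs12 hbound
  obtain ⟨hE2pos, hE2inv⟩ := D_pos_inv l (π / (n:ℝ)) hs2pos hl hbound
  obtain ⟨hE1pos, hE1inv⟩ := D_pos_inv l (π / ((n:ℝ) + 1)) hs1pos hl hbound1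
  have hDn : Dm (n:ℝ) x = cos (π / (n:ℝ)) * sin (l * (π / (n:ℝ))) /
      (cos (l * (π / (n:ℝ))) * Real.sqrt (cos (π / (n:ℝ)) ^ 2 - cos (l * (π / (n:ℝ))) ^ 2)) := by
    rw [Dm_eq (n:ℝ) x (by linarith), hl_def]
  have hDn1 : Dm ((n:ℝ) + 1) x = cos (π / ((n:ℝ) + 1)) * sin (l * (π / ((n:ℝ) + 1))) /
      (cos (l * (π / ((n:ℝ) + 1))) *
        Real.sqrt (cos (π / ((n:ℝ) + 1)) ^ 2 - cos (l * (π / ((n:ℝ) + 1))) ^ 2)) := by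
    rw [Dm_eq ((n:ℝ) + 1) x (by linarith), hl_def]
  rw [hDn, hDn1]
  set E1 := cos (π / ((n:ℝ) + 1)) * sin (l * (π / ((n:ℝ) + 1))) /
      (cos (l * (π / ((n:ℝ) + 1))) *
        Real.sqrt (cos (π / ((n:ℝ) + 1)) ^ 2 - cos (l * (π / ((n:ℝ) + 1))) ^ 2)) with hE1
  set E2 := cos (π / (n:ℝ)) * sin (l * (π / (n:ℝ))) /
      (cos (l * (π / (n:ℝ))) * Real.sqrt (cos (π / (n:ℝ)) ^ 2 - cos (l * (π / (n:ℝ))) ^ 2)) with hE2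
  set H1 := (cos (l * (π / ((n:ℝ) + 1))) / cos (π / ((n:ℝ) + 1))) ^ 2 *
      (1 - (sin (π / ((n:ℝ) + 1)) / sin (l * (π / ((n:ℝ) + 1)))) ^ 2) with hH1
  set H2 := (cos (l * (π / (n:ℝ))) / cos (π / (n:ℝ))) ^ 2 *
      (1 - (sin (π / (n:ℝ)) / sin (l * (π / (n:ℝ)))) ^ 2) with hH2
  have hprod := mul_le_mul_of_nonneg_right hH
    (le_of_lt (mul_pos (pow_pos hE1pos 2) (pow_pos hE2pos 2)))
  have e1 : H2 * (E1 ^ 2 * E2 ^ 2) = E1 ^ 2 := by linear_combination E1 ^ 2 * hE2inv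
  have e2 : H1 * (E1 ^ 2 * E2 ^ 2) = E2 ^ 2 := by linear_combination E2 ^ 2 * hE1inv
  have hsq : E1 ^ 2 ≤ E2 ^ 2 := by rw [e1, e2] at hprod; exact hprod
  exact (pow_le_pow_iff_left₀ hE1pos.le hE2pos.le two_ne_zero).mp hsq

theorem stmt_6 (n : ℕ) (hn : 4 ≤ n) :
    MonotoneOn (fun x : ℝ => Perim n x - Perim (n + 1) x)
      (Set.Ico 0 (((n : ℝ) - 2) * π)) := by
  have hπ := pi_pos
  have hn4 : (4:ℝ) ≤ (n:ℝ) := by exact_mod_cast hn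
  apply monotoneOn_of_deriv_nonneg (convex_Ico 0 (((n:ℝ) - 2) * π))
  · exact (continuousOn_Perim (n:ℝ) (by linarith) le_rfl).sub
      (continuousOn_Perim ((n:ℝ) + 1) (by linarith) (by nlinarith))
  · intro x hx
    rw [interior_Ico] at hx
    exact ((hasDerivAt_Perim (n:ℝ) x (by linarith) hx.1 hx.2).sub
      (hasDerivAt_Perim ((n:ℝ) + 1) x (by linarith) hx.1
        (by nlinarith [hx.2]))).differentiableAt.differentiableWithinAt
  · intro x hx
    rw [interior_Ico] at hx
    have h1 := hasDerivAt_Perim (n:ℝ) x (by linarith) hx.1 hx.2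
    have h2 := hasDerivAt_Perim ((n:ℝ) + 1) x (by linarith) hx.1 (by nlinarith [hx.2])
    have hD := (h1.sub h2).deriv
    rw [show (fun x => Perim (↑n) x - Perim (↑n + 1) x) = Perim ↑n - Perim (↑n + 1) from rfl, hD]
    have := Dcompare n hn x hx.1 hx.2
    linarith
end

section
/- Let φ(x) = 16·arcosh(cos(π/8)/sin((6π − x)/16)) on (0, 6π) (the perimeter of a regular hyperbolic octagon of area x). Then the function x·φ'(x) − φ(x) has exactly one root in (0, 6π), and this root lies in the interval (9, 10); in particular the root is greater than 2π. -/
set_option maxHeartbeats 1000000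
open Real Set

noncomputable def φ (x : ℝ) : ℝ :=
  16 * _root_.arcosh (Real.cos (π / 8) / Real.sin ((6 * π - x) / 16))

namespace StmtAux

noncomputable def cc : ℝ := Real.cos (π/8)
noncomputable def sf (x : ℝ) : ℝ := (6*π - x)/16
noncomputable def ψ (x : ℝ) : ℝ :=
  cc * Real.cos (sf x) / (Real.sin (sf x) * Real.sqrt (cc^2 - Real.sin (sf x)^2))

lemma pi_lb : (3.141592:ℝ) < π := Real.pi_gt_d6
lemma pi_ub : π < 3.141593 := Real.pi_lt_d6

lemma cc_pos : 0 < cc := by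
  have := Real.pi_pos
  exact Real.cos_pos_of_mem_Ioo ⟨by linarith, by linarith⟩

lemma sin_3pi8 : Real.sin (3*π/8) = cc := by
  rw [cc, ← Real.cos_pi_div_two_sub]
  ring_nf

lemma sf_mem {x : ℝ} (hx : x ∈ Ioo 0 (6*π)) : 0 < sf x ∧ sf x < 3*π/8 := by
  obtain ⟨h1, h2⟩ := hx
  constructor <;> (unfold sf; nlinarith [Real.pi_pos])

lemma basic {x : ℝ} (hx : x ∈ Ioo 0 (6*π)) :
    0 < Real.sin (sf x) ∧ Real.sin (sf x) < cc ∧ 0 < Real.cos (sf x) := by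
  obtain ⟨h1, h2⟩ := sf_mem hx
  have hpi := Real.pi_pos
  have h3 : sf x < π/2 := by linarith
  refine ⟨Real.sin_pos_of_pos_of_lt_pi h1 (by linarith), ?_, Real.cos_pos_of_mem_Ioo ⟨by linarith, h3⟩⟩
  rw [← sin_3pi8]
  exact Real.strictMonoOn_sin ⟨by linarith, le_of_lt h3⟩ ⟨by linarith, by linarith⟩ h2

lemma hasDeriv {x : ℝ} (hx : x ∈ Ioo 0 (6*π)) : HasDerivAt φ (ψ x) x := by
  obtain ⟨hS, hSc, hC⟩ := basic hx
  set S := Real.sin (sf x) with hSdef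
  set C := Real.cos (sf x) with hCdef
  have hSne : S ≠ 0 := ne_of_gt hS
  have hw2 : cc^2 - S^2 > 0 := by nlinarith [cc_pos]
  set w := Real.sqrt (cc^2 - S^2) with hwdef
  have hwpos : 0 < w := Real.sqrt_pos.2 hw2
  have hwsq : w^2 = cc^2 - S^2 := Real.sq_sqrt hw2.le
  have h1 : HasDerivAt (fun y : ℝ => (6*π - y)/16) (-1/16 : ℝ) x := by
    have := ((hasDerivAt_id x).const_sub (6*π)).div_const 16
    simpa using this
  have h2 : HasDerivAt (fun y : ℝ => Real.sin ((6*π - y)/16)) (C * (-1/16)) x := by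
    have := h1.sin
    exact this
  have h3 : HasDerivAt (fun y : ℝ => cc / Real.sin ((6*π - y)/16))
      ((0 * S - cc * (C * (-1/16))) / S^2) x := by
    have := (hasDerivAt_const x cc).div h2 hSne
    exact this
  have hu1 : 1 < cc / S := (one_lt_div hS).2 hSc
  have hu2 : (cc/S)^2 - 1 > 0 := by nlinarith
  have h4 := (h3.pow 2).sub_const 1
  have hval : cc / Real.sin ((6*π - x)/16) = cc / S := by rw [hSdef]; rfl
  have h5 := h4.sqrt (by
    exact ne_of_gt hu2)
  have h6 := h3.add h5
  have hargpos : 0 < cc / S + Real.sqrt ((cc/S)^2 - 1) :=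
    add_pos_of_pos_of_nonneg (div_pos cc_pos hS) (Real.sqrt_nonneg _)
  have h7 := h6.log (by exact ne_of_gt hargpos)
  have h8 := h7.const_mul (16:ℝ)
  have hfun : (fun y : ℝ => 16 * Real.log (cc / Real.sin ((6*π - y)/16)
      + Real.sqrt ((cc / Real.sin ((6*π - y)/16))^2 - 1))) = φ := by
    funext y
    simp only [φ, _root_.arcosh, cc, sf]
  simp only [Pi.add_apply, Pi.pow_apply] at h8
  rw [hfun] at h8
  refine h8.congr_deriv ?_
  simp only [hval]
  -- sqrt ((cc/S)^2-1) = w / S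
  have hv : Real.sqrt ((cc/S)^2 - 1) = w / S := by
    have heq : (cc/S)^2 - 1 = (w/S)^2 := by
      field_simp
      nlinarith [hwsq]
    rw [heq, Real.sqrt_sq (by positivity)]
  rw [hv]
  have h3' : cc + w ≠ 0 := by nlinarith [cc_pos]
  rw [ψ, ← hSdef, ← hCdef, ← hwdef]
  field_simp
  linear_combination (2*cc^2*C) * (mul_inv_cancel₀ hSne)

end StmtAux

namespace StmtAux

noncomputable def tv (x : ℝ) : ℝ := Real.sin (sf x) ^ 2

lemma cc_sq : cc^2 = 1 - Real.sin (π/8)^2 := by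
  have := Real.sin_sq_add_cos_sq (π/8)
  rw [cc]; linarith

lemma sigma_pos : 0 < Real.sin (π/8) := by
  have := Real.pi_pos
  exact Real.sin_pos_of_pos_of_lt_pi (by linarith) (by linarith)

lemma sigma_lt_one : Real.sin (π/8) < 1 := by
  have hpi := Real.pi_pos
  have h : Real.sin (π/8) < Real.sin (π/2) :=
    Real.strictMonoOn_sin ⟨by linarith, by linarith⟩ ⟨by linarith, le_refl _⟩ (by linarith)
  rwa [Real.sin_pi_div_two] at h

lemma psi_sq {x : ℝ} (hx : x ∈ Ioo 0 (6*π)) :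
    ψ x ^ 2 * (tv x * (cc^2 - tv x)) = cc^2 * (1 - tv x) := by
  obtain ⟨hS, hSc, hC⟩ := basic hx
  have hw2 : cc^2 - Real.sin (sf x)^2 > 0 := by nlinarith [cc_pos]
  have hwsq : Real.sqrt (cc^2 - Real.sin (sf x)^2)^2 = cc^2 - Real.sin (sf x)^2 :=
    Real.sq_sqrt hw2.le
  have hC2 : Real.cos (sf x)^2 = 1 - Real.sin (sf x)^2 := by
    have := Real.sin_sq_add_cos_sq (sf x); linarith
  have hwpos : 0 < Real.sqrt (cc^2 - Real.sin (sf x)^2) := Real.sqrt_pos.2 hw2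
  rw [ψ, tv]
  rw [div_pow, mul_pow, mul_pow, hwsq, hC2]
  field_simp

lemma psi_pos {x : ℝ} (hx : x ∈ Ioo 0 (6*π)) : 0 < ψ x := by
  obtain ⟨hS, hSc, hC⟩ := basic hx
  have hw2 : cc^2 - Real.sin (sf x)^2 > 0 := by nlinarith [cc_pos]
  have hwpos : 0 < Real.sqrt (cc^2 - Real.sin (sf x)^2) := Real.sqrt_pos.2 hw2
  rw [ψ]
  exact div_pos (mul_pos cc_pos hC) (mul_pos hS hwpos)

lemma tv_lt_tv {x y : ℝ} (hx : x ∈ Ioo 0 (6*π)) (hy : y ∈ Ioo 0 (6*π)) (hxy : x < y) :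
    tv y < tv x := by
  obtain ⟨hSx, _, _⟩ := basic hx
  obtain ⟨hSy, _, _⟩ := basic hy
  have hsf : sf y < sf x := by rw [sf, sf]; linarith
  obtain ⟨h1, h2⟩ := sf_mem hx
  obtain ⟨h3, h4⟩ := sf_mem hy
  have hpi := Real.pi_pos
  have hlt : Real.sin (sf y) < Real.sin (sf x) :=
    Real.strictMonoOn_sin ⟨by linarith, by linarith⟩ ⟨by linarith, by linarith⟩ hsf
  rw [tv, tv]
  nlinarith

lemma tv_lt_ccsq {x : ℝ} (hx : x ∈ Ioo 0 (6*π)) : tv x < cc^2 := by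
  obtain ⟨hS, hSc, _⟩ := basic hx
  rw [tv]; nlinarith

lemma tv_pos {x : ℝ} (hx : x ∈ Ioo 0 (6*π)) : 0 < tv x := by
  obtain ⟨hS, _, _⟩ := basic hx
  rw [tv]; positivity

noncomputable def xstar : ℝ := 6*π - 16 * Real.arcsin (Real.sqrt (1 - Real.sin (π/8)))

lemma sqrt_tm_le_one : Real.sqrt (1 - Real.sin (π/8)) ≤ 1 := by
  have h1 : (1:ℝ) - Real.sin (π/8) ≤ 1 := by nlinarith [sigma_pos]
  calc Real.sqrt (1 - Real.sin (π/8)) ≤ Real.sqrt 1 := Real.sqrt_le_sqrt h1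
    _ = 1 := Real.sqrt_one

lemma tv_ge {x : ℝ} (hx : x ∈ Ioo 0 (6*π)) (h : x ≤ xstar) : 1 - Real.sin (π/8) ≤ tv x := by
  obtain ⟨h1, h2⟩ := sf_mem hx
  have hpi := Real.pi_pos
  have harc : Real.arcsin (Real.sqrt (1 - Real.sin (π/8))) ≤ sf x := by
    rw [xstar] at h; rw [sf]; linarith
  have hmem := Real.arcsin_mem_Icc (Real.sqrt (1 - Real.sin (π/8)))
  have hsin : Real.sin (Real.arcsin (Real.sqrt (1 - Real.sin (π/8)))) ≤ Real.sin (sf x) := by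
    rcases eq_or_lt_of_le harc with he | hl
    · rw [he]
    · exact le_of_lt (Real.strictMonoOn_sin ⟨hmem.1, hmem.2⟩ ⟨by linarith, by linarith⟩ hl)
  rw [Real.sin_arcsin (by linarith [Real.sqrt_nonneg (1 - Real.sin (π/8))]) sqrt_tm_le_one] at hsin
  have hq : Real.sqrt (1 - Real.sin (π/8))^2 = 1 - Real.sin (π/8) :=
    Real.sq_sqrt (by nlinarith [sigma_lt_one])
  rw [tv]
  nlinarith [Real.sqrt_nonneg (1 - Real.sin (π/8))]

lemma tv_le {x : ℝ} (hx : x ∈ Ioo 0 (6*π)) (h : xstar ≤ x) : tv x ≤ 1 - Real.sin (π/8) := by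
  obtain ⟨h1, h2⟩ := sf_mem hx
  obtain ⟨hS, _, _⟩ := basic hx
  have hpi := Real.pi_pos
  have harc : sf x ≤ Real.arcsin (Real.sqrt (1 - Real.sin (π/8))) := by
    rw [xstar] at h; rw [sf]; linarith
  have hmem := Real.arcsin_mem_Icc (Real.sqrt (1 - Real.sin (π/8)))
  have hsin : Real.sin (sf x) ≤ Real.sin (Real.arcsin (Real.sqrt (1 - Real.sin (π/8)))) := by
    rcases eq_or_lt_of_le harc with he | hl
    · rw [he]
    · exact le_of_lt (Real.strictMonoOn_sin ⟨by linarith, by linarith⟩ ⟨hmem.1, hmem.2⟩ hl)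
  rw [Real.sin_arcsin (by linarith [Real.sqrt_nonneg (1 - Real.sin (π/8))]) sqrt_tm_le_one] at hsin
  have hq : Real.sqrt (1 - Real.sin (π/8))^2 = 1 - Real.sin (π/8) :=
    Real.sq_sqrt (by nlinarith [sigma_lt_one])
  rw [tv]
  nlinarith

lemma psiA {x y : ℝ} (hx : x ∈ Ioo 0 (6*π)) (hy : y ∈ Ioo 0 (6*π)) (hxy : x < y)
    (hy2 : y ≤ xstar) : ψ y < ψ x := by
  set σ := Real.sin (π/8)
  have hσ0 := sigma_pos
  have hσ1 := sigma_lt_one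
  set tx := tv x
  set ty := tv y
  have hty : 1 - σ ≤ ty := tv_ge hy hy2
  have htxy : ty < tx := tv_lt_tv hx hy hxy
  have htx : tx < 1 - σ^2 := by have := tv_lt_ccsq hx; rw [cc_sq] at this; exact this
  have hty1 : ty < 1 := by nlinarith
  have htypos : 0 < ty := tv_pos hy
  have key : (1-ty)*(tx*((1-σ^2)-tx)) < (1-tx)*(ty*((1-σ^2)-ty)) := by
    have h1 : 0 < tx - ty := by linarith
    have hpos : 0 < (tx-(1-σ))*(1-ty)+σ*(ty-(1-σ)) := by nlinarith
    nlinarith [mul_pos h1 hpos]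
  have hax := psi_sq hx
  have hay := psi_sq hy
  rw [cc_sq] at hax hay
  have hPx : 0 < tx*((1-σ^2)-tx) := mul_pos (by linarith) (by linarith)
  have hPy : 0 < ty*((1-σ^2)-ty) := mul_pos htypos (by nlinarith)
  have hapos := psi_pos hx
  have hbpos := psi_pos hy
  have hsq : ψ y ^2 < ψ x ^2 := by
    have hcc2 : (0:ℝ) < 1 - σ^2 := by nlinarith
    have h2 : ψ y ^2 * (ty*((1-σ^2)-ty)) * (tx*((1-σ^2)-tx))
        < ψ x ^2 * (tx*((1-σ^2)-tx)) * (ty*((1-σ^2)-ty)) := by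
      rw [hax, hay]
      calc (1-σ^2) * (1 - ty) * (tx*((1-σ^2)-tx))
          < (1-σ^2) * ((1-tx)*(ty*((1-σ^2)-ty))) := by
            rw [mul_assoc]
            exact (mul_lt_mul_iff_right₀ hcc2).2 key
        _ = (1-σ^2) * (1 - tx) * (ty*((1-σ^2)-ty)) := by ring
    nlinarith [mul_pos hPx hPy]
  nlinarith

lemma psiB {x y : ℝ} (hx : x ∈ Ioo 0 (6*π)) (hy : y ∈ Ioo 0 (6*π)) (hx2 : xstar ≤ x)
    (hxy : x < y) : ψ x < ψ y := by
  set σ := Real.sin (π/8)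
  have hσ0 := sigma_pos
  have hσ1 := sigma_lt_one
  set tx := tv x
  set ty := tv y
  have htx : tx ≤ 1 - σ := tv_le hx hx2
  have htxy : ty < tx := tv_lt_tv hx hy hxy
  have htypos : 0 < ty := tv_pos hy
  have htxcc : tx < 1 - σ^2 := by have := tv_lt_ccsq hx; rw [cc_sq] at this; exact this
  have key : (1-tx)*(ty*((1-σ^2)-ty)) < (1-ty)*(tx*((1-σ^2)-tx)) := by
    have h1 : 0 < tx - ty := by linarith
    have hpos : 0 < (1-σ^2) - tx - ty + tx*ty := by
      nlinarith [mul_pos (show 0 < 1 - tx by nlinarith) (show 0 < 1 - ty by nlinarith)]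
    nlinarith [mul_pos h1 hpos]
  have hax := psi_sq hx
  have hay := psi_sq hy
  rw [cc_sq] at hax hay
  have hPx : 0 < tx*((1-σ^2)-tx) := mul_pos (by linarith) (by linarith)
  have hPy : 0 < ty*((1-σ^2)-ty) := mul_pos htypos (by nlinarith)
  have hapos := psi_pos hx
  have hbpos := psi_pos hy
  have hsq : ψ x ^2 < ψ y ^2 := by
    have hcc2 : (0:ℝ) < 1 - σ^2 := by nlinarith
    have h2 : ψ x ^2 * (tx*((1-σ^2)-tx)) * (ty*((1-σ^2)-ty))
        < ψ y ^2 * (ty*((1-σ^2)-ty)) * (tx*((1-σ^2)-tx)) := by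
      rw [hax, hay]
      calc (1-σ^2) * (1 - tx) * (ty*((1-σ^2)-ty))
          < (1-σ^2) * ((1-ty)*(tx*((1-σ^2)-tx))) := by
            rw [mul_assoc]
            exact (mul_lt_mul_iff_right₀ hcc2).2 key
        _ = (1-σ^2) * (1 - ty) * (tx*((1-σ^2)-tx)) := by ring
    nlinarith [mul_pos hPx hPy]
  nlinarith

end StmtAux

namespace StmtAux

lemma six_pi_gt : (18.8:ℝ) < 6*π := by nlinarith [pi_lb]

lemma xstar_lt_9 : xstar < 9 := by
  have hpi := Real.pi_pos
  set q := Real.sqrt (1 - Real.sin (π/8)) with hq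
  have hσπ : Real.sin (π/8) < π/8 := Real.sin_lt (by linarith)
  have hq2 : q^2 = 1 - Real.sin (π/8) := Real.sq_sqrt (by nlinarith [sigma_lt_one])
  have hq0 : 0 ≤ q := Real.sqrt_nonneg _
  set s9 := (6*π - 9)/16 with hs9
  have hs9a : 0 < s9 := by rw [hs9]; nlinarith [pi_lb]
  have hs9b : s9 < 0.616 := by rw [hs9]; nlinarith [pi_ub]
  have hsin9 : Real.sin s9 < q := by
    have h1 : Real.sin s9 < s9 := Real.sin_lt hs9a
    nlinarith [pi_ub]
  -- arcsin mono
  have h2 : s9 < Real.arcsin q := by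
    have ha : Real.arcsin (Real.sin s9) < Real.arcsin q := by
      apply Real.strictMonoOn_arcsin ⟨by nlinarith [Real.neg_one_le_sin s9], by nlinarith [Real.sin_le_one s9]⟩
        ⟨by linarith, sqrt_tm_le_one⟩ hsin9
    rwa [Real.arcsin_sin (by linarith) (by nlinarith [pi_lb])] at ha
  rw [xstar]
  linarith

lemma xstar_pos : 0 < xstar := by
  have hpi := Real.pi_pos
  set q := Real.sqrt (1 - Real.sin (π/8)) with hq
  have hq2 : q^2 = 1 - Real.sin (π/8) := Real.sq_sqrt (by nlinarith [sigma_lt_one])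
  have hq0 : 0 ≤ q := Real.sqrt_nonneg _
  have hqcc : q < cc := by nlinarith [cc_pos, cc_sq, sigma_pos, sigma_lt_one]
  have harc : Real.arcsin q < 3*π/8 := by
    by_contra hcon
    push_neg at hcon
    have hmem := Real.arcsin_mem_Icc q
    have : Real.sin (3*π/8) ≤ Real.sin (Real.arcsin q) := by
      rcases eq_or_lt_of_le hcon with he | hl
      · rw [he]
      · exact le_of_lt (Real.strictMonoOn_sin ⟨by linarith, by linarith⟩ ⟨hmem.1, hmem.2⟩ hl)
    rw [Real.sin_arcsin (by linarith) sqrt_tm_le_one, sin_3pi8] at this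
    linarith
  rw [xstar]
  linarith

lemma xstar_mem : xstar ∈ Ioo 0 (6*π) := ⟨xstar_pos, by nlinarith [xstar_lt_9, six_pi_gt]⟩

lemma phi_zero : φ 0 = 0 := by
  have h : (6*π - (0:ℝ))/16 = 3*π/8 := by ring
  have h2 : Real.sin ((6*π-(0:ℝ))/16) = Real.cos (π/8) := by rw [h]; exact sin_3pi8
  have h3 : Real.cos (π/8) ≠ 0 := ne_of_gt cc_pos
  rw [φ, _root_.arcosh, h2, div_self h3]
  norm_num

lemma phi_contAt {z : ℝ} (hz1 : 0 ≤ z) (hz2 : z < 6*π) : ContinuousAt φ z := by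
  have hpi := Real.pi_pos
  have hs1 : 0 < (6*π - z)/16 := by linarith
  have hs2 : (6*π - z)/16 ≤ 3*π/8 := by linarith
  have hS : 0 < Real.sin ((6*π - z)/16) :=
    Real.sin_pos_of_pos_of_lt_pi hs1 (by linarith)
  have hSc : Real.sin ((6*π - z)/16) ≤ cc := by
    rw [← sin_3pi8]
    rcases eq_or_lt_of_le hs2 with he | hl
    · rw [he]
    · exact le_of_lt (Real.strictMonoOn_sin ⟨by linarith, by linarith⟩
        ⟨by linarith, by linarith⟩ hl)
  have hF : ContinuousAt (fun y : ℝ => Real.cos (π/8) / Real.sin ((6*π - y)/16)) z := by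
    apply ContinuousAt.div continuousAt_const
    · exact (Real.continuous_sin.comp (by continuity)).continuousAt
    · exact ne_of_gt hS
  have hu1 : 1 ≤ Real.cos (π/8) / Real.sin ((6*π - z)/16) := by
    rw [le_div_iff₀ hS, one_mul, ← cc]
    exact hSc
  have hG : ContinuousAt (fun y : ℝ =>
      Real.cos (π/8) / Real.sin ((6*π - y)/16) +
      Real.sqrt ((Real.cos (π/8) / Real.sin ((6*π - y)/16))^2 - 1)) z := by
    apply hF.add
    exact Real.continuous_sqrt.continuousAt.comp ((hF.pow 2).sub continuousAt_const)
  have hpos : 0 < Real.cos (π/8) / Real.sin ((6*π - z)/16) +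
      Real.sqrt ((Real.cos (π/8) / Real.sin ((6*π - z)/16))^2 - 1) := by
    have := Real.sqrt_nonneg ((Real.cos (π/8) / Real.sin ((6*π - z)/16))^2 - 1)
    linarith
  have : ContinuousAt (fun y : ℝ => 16 * Real.log
      (Real.cos (π/8) / Real.sin ((6*π - y)/16) +
       Real.sqrt ((Real.cos (π/8) / Real.sin ((6*π - y)/16))^2 - 1))) z := by
    exact continuousAt_const.mul (hG.log (ne_of_gt hpos))
  exact this

noncomputable def G (x : ℝ) : ℝ := x * ψ x - φ x

lemma G_neg_A {x : ℝ} (hx : x ∈ Ioo 0 (6*π)) (h : x ≤ xstar) : G x < 0 := by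
  have hcont : ContinuousOn φ (Icc 0 x) := fun z hz =>
    (phi_contAt hz.1 (lt_of_le_of_lt hz.2 hx.2)).continuousWithinAt
  obtain ⟨ξ, hξ, hslope⟩ := exists_hasDerivAt_eq_slope φ ψ hx.1 hcont
    (fun z hz => hasDeriv ⟨hz.1, lt_trans hz.2 hx.2⟩)
  rw [phi_zero, sub_zero, sub_zero, eq_div_iff (ne_of_gt hx.1)] at hslope
  have hξmem : ξ ∈ Ioo 0 (6*π) := ⟨hξ.1, lt_trans hξ.2 hx.2⟩
  have hlt : ψ x < ψ ξ := psiA hξmem hx hξ.2 h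
  have hφx : φ x = x * ψ ξ := by linarith [hslope]
  rw [G, hφx]
  nlinarith [hx.1]

lemma G_lt_G {x y : ℝ} (hx : x ∈ Ioo 0 (6*π)) (hy : y ∈ Ioo 0 (6*π)) (h : xstar ≤ x)
    (hxy : x < y) : G x < G y := by
  have hcont : ContinuousOn φ (Icc x y) := fun z hz =>
    (phi_contAt (le_trans hx.1.le hz.1) (lt_of_le_of_lt hz.2 hy.2)).continuousWithinAt
  obtain ⟨ξ, hξ, hslope⟩ := exists_hasDerivAt_eq_slope φ ψ hxy hcont
    (fun z hz => hasDeriv ⟨lt_trans hx.1 hz.1, lt_trans hz.2 hy.2⟩)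
  have hξmem : ξ ∈ Ioo 0 (6*π) := ⟨lt_trans hx.1 hξ.1, lt_trans hξ.2 hy.2⟩
  have hψξy : ψ ξ < ψ y := psiB hξmem hy (le_trans h hξ.1.le) hξ.2
  have hψxy : ψ x < ψ y := psiB hx hy h hxy
  rw [eq_div_iff (ne_of_gt (sub_pos.2 hxy))] at hslope
  have hφ : φ y - φ x = (y - x) * ψ ξ := by linarith [hslope]
  rw [G, G]
  nlinarith [hx.1, sub_pos.2 hxy]

end StmtAux

namespace StmtAux

lemma sqrt_ge' {x q : ℝ} (h : q^2 ≤ x) : q ≤ Real.sqrt x := by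
  rcases le_or_gt q 0 with hq | hq
  · linarith [Real.sqrt_nonneg x]
  · nlinarith [Real.sq_sqrt (le_trans (sq_nonneg q) h), Real.sqrt_nonneg x]

lemma sqrt_le' {x q : ℝ} (hq : 0 ≤ q) (h : x ≤ q^2) : Real.sqrt x ≤ q := by
  rcases le_or_gt x 0 with hx | hx
  · rw [Real.sqrt_eq_zero_of_nonpos hx]; exact hq
  · nlinarith [Real.sq_sqrt hx.le, Real.sqrt_nonneg x]

lemma sqrt2_bounds : (1.4142135:ℝ) ≤ Real.sqrt 2 ∧ Real.sqrt 2 ≤ 1.4142136 :=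
  ⟨sqrt_ge' (by norm_num), sqrt_le' (by norm_num) (by norm_num)⟩

lemma cc_sq_eq : cc^2 = (2 + Real.sqrt 2)/4 := by
  rw [cc, Real.cos_pi_div_eight, div_pow, Real.sq_sqrt (by positivity)]
  norm_num

lemma cc_bounds : (0.9238795:ℝ) ≤ cc ∧ cc ≤ 0.9238796 := by
  have h := cc_sq_eq
  have h2 := sqrt2_bounds
  have h3 := cc_pos
  constructor <;> nlinarith [h2.1, h2.2]

lemma trig9 : (0.5760026:ℝ) ≤ Real.sin ((6*π-9)/16) ∧ Real.sin ((6*π-9)/16) ≤ 0.5783513 ∧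
    (0.8158894:ℝ) ≤ Real.cos ((6*π-9)/16) ∧ Real.cos ((6*π-9)/16) ≤ 0.8170229 := by
  set y := (6*π-9)/32 with hy
  have hylb : (0.3077985:ℝ) ≤ y := by rw [hy]; nlinarith [pi_lb]
  have hyub : y ≤ 0.3077987 := by rw [hy]; nlinarith [pi_ub]
  have habs : |y| ≤ 1 := abs_le.2 ⟨by linarith, by linarith⟩
  have hs := abs_le.1 (Real.sin_bound habs)
  have hc := abs_le.1 (Real.cos_bound habs)
  rw [abs_of_pos (by linarith : (0:ℝ) < y)] at hs hc
  have hy3l : (0.3077985:ℝ)^3 ≤ y^3 := by nlinarith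
  have hy3u : y^3 ≤ (0.3077987:ℝ)^3 := by nlinarith
  have hy2u : y^2 ≤ (0.3077987:ℝ)^2 := by nlinarith
  have hy2l : (0.3077985:ℝ)^2 ≤ y^2 := by nlinarith
  have hy4u : y^4 ≤ (0.3077987:ℝ)^4 := by nlinarith
  have hy4l : (0:ℝ) ≤ y^4 := by positivity
  have ha1 : (0.3024708:ℝ) ≤ Real.sin y := by linarith [mul_le_mul_of_nonneg_left (show y ≤ 1 by linarith) hy4l, hs.1, hs.2, hylb, hy3u, hy4u, show (0.3077985:ℝ) - (0.3077987:ℝ)^3/6 - (0.3077987:ℝ)^4*(5/96) ≥ 0.3024708 by norm_num]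
  have ha2 : Real.sin y ≤ 0.3034061 := by linarith [mul_le_mul_of_nonneg_left (show y ≤ 1 by linarith) hy4l, hs.1, hs.2, hyub, hy3l, hy4u, show (0.3077987:ℝ) - (0.3077985:ℝ)^3/6 + (0.3077987:ℝ)^4*(5/96) ≤ 0.3034061 by norm_num]
  have hb1 : (0.9521624:ℝ) ≤ Real.cos y := by linarith [hc.1, hc.2, hy2u, hy4u, show (1:ℝ) - (0.3077987:ℝ)^2/2 - (0.3077987:ℝ)^4*(5/96) ≥ 0.9521624 by norm_num]
  have hb2 : Real.cos y ≤ 0.9530976 := by linarith [hc.1, hc.2, hy2l, hy4u, show (1:ℝ) - (0.3077985:ℝ)^2/2 + (0.3077987:ℝ)^4*(5/96) ≤ 0.9530976 by norm_num]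
  have h2 : (6*π-9)/16 = 2*y := by rw [hy]; ring
  have hcos2 : Real.cos (2*y) = 1 - 2*Real.sin y^2 := by
    rw [Real.cos_two_mul']
    nlinarith [Real.sin_sq_add_cos_sq y]
  rw [h2, Real.sin_two_mul, hcos2]
  refine ⟨by nlinarith, by nlinarith, by nlinarith, by nlinarith⟩

lemma trig10 : (0.5244140:ℝ) ≤ Real.sin ((6*π-10)/16) ∧ Real.sin ((6*π-10)/16) ≤ 0.5259195 ∧
    (0.8505831:ℝ) ≤ Real.cos ((6*π-10)/16) ∧ Real.cos ((6*π-10)/16) ≤ 0.8512490 := by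
  set y := (6*π-10)/32 with hy
  have hylb : (0.2765485:ℝ) ≤ y := by rw [hy]; nlinarith [pi_lb]
  have hyub : y ≤ 0.2765487 := by rw [hy]; nlinarith [pi_ub]
  have habs : |y| ≤ 1 := abs_le.2 ⟨by linarith, by linarith⟩
  have hs := abs_le.1 (Real.sin_bound habs)
  have hc := abs_le.1 (Real.cos_bound habs)
  rw [abs_of_pos (by linarith : (0:ℝ) < y)] at hs hc
  have hy3l : (0.2765485:ℝ)^3 ≤ y^3 := by nlinarith
  have hy3u : y^3 ≤ (0.2765487:ℝ)^3 := by nlinarith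
  have hy2u : y^2 ≤ (0.2765487:ℝ)^2 := by nlinarith
  have hy2l : (0.2765485:ℝ)^2 ≤ y^2 := by nlinarith
  have hy4u : y^4 ≤ (0.2765487:ℝ)^4 := by nlinarith
  have hy4l : (0:ℝ) ≤ y^4 := by positivity
  have ha1 : (0.2727188:ℝ) ≤ Real.sin y := by linarith [mul_le_mul_of_nonneg_left (show y ≤ 1 by linarith) hy4l, hs.1, hs.2, hylb, hy3u, hy4u, show (0.2765485:ℝ) - (0.2765487:ℝ)^3/6 - (0.2765487:ℝ)^4*(5/96) ≥ 0.2727188 by norm_num]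
  have ha2 : Real.sin y ≤ 0.2733284 := by linarith [mul_le_mul_of_nonneg_left (show y ≤ 1 by linarith) hy4l, hs.1, hs.2, hyub, hy3l, hy4u, show (0.2765487:ℝ) - (0.2765485:ℝ)^3/6 + (0.2765487:ℝ)^4*(5/96) ≤ 0.2733284 by norm_num]
  have hb1 : (0.9614557:ℝ) ≤ Real.cos y := by linarith [hc.1, hc.2, hy2u, hy4u, show (1:ℝ) - (0.2765487:ℝ)^2/2 - (0.2765487:ℝ)^4*(5/96) ≥ 0.9614557 by norm_num]
  have hb2 : Real.cos y ≤ 0.9620652 := by linarith [hc.1, hc.2, hy2l, hy4u, show (1:ℝ) - (0.2765485:ℝ)^2/2 + (0.2765487:ℝ)^4*(5/96) ≤ 0.9620652 by norm_num]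
  have h2 : (6*π-10)/16 = 2*y := by rw [hy]; ring
  have hcos2 : Real.cos (2*y) = 1 - 2*Real.sin y^2 := by
    rw [Real.cos_two_mul']
    nlinarith [Real.sin_sq_add_cos_sq y]
  rw [h2, Real.sin_two_mul, hcos2]
  refine ⟨by nlinarith, by nlinarith, by nlinarith, by nlinarith⟩

end StmtAux

namespace StmtAux

lemma mem9 : (9:ℝ) ∈ Ioo 0 (6*π) := ⟨by norm_num, by nlinarith [six_pi_gt]⟩
lemma mem10 : (10:ℝ) ∈ Ioo 0 (6*π) := ⟨by norm_num, by nlinarith [six_pi_gt]⟩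

lemma sf9 : sf 9 = (6*π-9)/16 := rfl
lemma sf10 : sf 10 = (6*π-10)/16 := rfl

lemma G9_neg : G 9 < 0 := by
  obtain ⟨hS1, hS2, hC1, hC2⟩ := trig9
  obtain ⟨hcc1, hcc2⟩ := cc_bounds
  have hccsq := cc_sq_eq
  have hsq2 := sqrt2_bounds
  set S := Real.sin ((6*π-9)/16) with hSdef
  set C := Real.cos ((6*π-9)/16) with hCdef
  have hSpos : (0:ℝ) < S := by linarith
  -- sqrt lower bound
  have hW1 : (0.7204602:ℝ) ≤ Real.sqrt (cc^2 - S^2) := by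
    apply sqrt_ge'
    nlinarith [hsq2.1]
  have hWpos : (0:ℝ) < Real.sqrt (cc^2 - S^2) := by linarith
  -- psi upper bound
  have hψ : ψ 9 ≤ 1.8189267 := by
    rw [ψ, sf9, ← hSdef, ← hCdef]
    rw [div_le_iff₀ (mul_pos hSpos hWpos)]
    nlinarith [hW1, hWpos]
  -- phi lower bound
  have hu1 : (1.5974365:ℝ) ≤ cc / S := by
    rw [le_div_iff₀ hSpos]
    nlinarith
  have hupos : (0:ℝ) < cc / S := by linarith
  have hr1 : (1.2457139:ℝ) ≤ Real.sqrt ((cc/S)^2 - 1) := by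
    apply sqrt_ge'
    nlinarith
  have harg : (2.8431504:ℝ) ≤ cc / S + Real.sqrt ((cc/S)^2 - 1) := by linarith
  have hlog : Real.log 2.8431504 ≤ Real.log (cc / S + Real.sqrt ((cc/S)^2 - 1)) :=
    Real.log_le_log (by norm_num) harg
  -- chain of square roots
  have step : ∀ r A : ℝ, 0 < r → r^2 ≤ A → 2 * Real.log r ≤ Real.log A := by
    intro r A hr h
    have h1 : Real.log (r^2) ≤ Real.log A := Real.log_le_log (by positivity) h
    rw [Real.log_pow] at h1
    push_cast at h1
    linarith
  have c1 := step 1.6861643 2.8431504 (by norm_num) (by norm_num)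
  have c2 := step 1.2985237 1.6861643 (by norm_num) (by norm_num)
  have c3 := step 1.1395277 1.2985237 (by norm_num) (by norm_num)
  have c4 := step 1.0674865 1.1395277 (by norm_num) (by norm_num)
  have c5 := step 1.0331922 1.0674865 (by norm_num) (by norm_num)
  have c6 := step 1.0164605 1.0331922 (by norm_num) (by norm_num)
  have cbase : (1:ℝ) - (1.0164605)⁻¹ ≤ Real.log 1.0164605 := by
    have h := Real.log_le_sub_one_of_pos (show (0:ℝ) < (1.0164605:ℝ)⁻¹ by norm_num)
    rw [Real.log_inv] at h
    linarith
  have hlogA : (64:ℝ) * (1 - (1.0164605:ℝ)⁻¹) ≤ Real.log 2.8431504 := by linarith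
  have hφ : 16 * Real.log (cc / S + Real.sqrt ((cc/S)^2 - 1)) ≤ φ 9 := by
    rw [φ, _root_.arcosh]
    rw [show Real.cos (π/8) = cc from rfl]
  rw [G]
  have hfin : (9:ℝ) * 1.8189267 < 16 * (64 * (1 - (1.0164605:ℝ)⁻¹)) := by norm_num
  have hψpos := psi_pos mem9
  nlinarith [hlog, hlogA, hφ]

lemma G10_pos : 0 < G 10 := by
  obtain ⟨hS1, hS2, hC1, hC2⟩ := trig10
  obtain ⟨hcc1, hcc2⟩ := cc_bounds
  have hccsq := cc_sq_eq
  have hsq2 := sqrt2_bounds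
  set S := Real.sin ((6*π-10)/16) with hSdef
  set C := Real.cos ((6*π-10)/16) with hCdef
  have hSpos : (0:ℝ) < S := by linarith
  have hCpos : (0:ℝ) < C := by linarith
  have hW2 : Real.sqrt (cc^2 - S^2) ≤ 0.7606204 := by
    apply sqrt_le' (by norm_num)
    nlinarith [hsq2.2]
  have hWpos : (0:ℝ) < Real.sqrt (cc^2 - S^2) := by
    apply Real.sqrt_pos.2
    nlinarith [hsq2.1]
  -- psi lower bound
  have hψ : (1.9644672:ℝ) ≤ ψ 10 := by
    rw [ψ, sf10, ← hSdef, ← hCdef]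
    rw [le_div_iff₀ (mul_pos hSpos hWpos)]
    nlinarith [hW2, hWpos]
  -- phi upper bound
  have hu2 : cc / S ≤ 1.7617372 := by
    rw [div_le_iff₀ hSpos]
    nlinarith
  have hupos : (0:ℝ) < cc / S := div_pos cc_pos hSpos
  have hr2 : Real.sqrt ((cc/S)^2 - 1) ≤ 1.4504200 := by
    apply sqrt_le' (by norm_num)
    nlinarith
  have hargpos : (0:ℝ) < cc / S + Real.sqrt ((cc/S)^2 - 1) := by
    have := Real.sqrt_nonneg ((cc/S)^2 - 1); linarith
  have harg : cc / S + Real.sqrt ((cc/S)^2 - 1) ≤ 3.2121572 := by linarith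
  have hlog : Real.log (cc / S + Real.sqrt ((cc/S)^2 - 1)) ≤ Real.log 3.2121572 :=
    Real.log_le_log hargpos harg
  have step : ∀ r A : ℝ, 1 ≤ r → A ≤ r^2 → 0 < A → Real.log A ≤ 2 * Real.log r := by
    intro r A hr h hA
    have h1 : Real.log A ≤ Real.log (r^2) := Real.log_le_log hA h
    rw [Real.log_pow] at h1
    push_cast at h1
    linarith
  have c1 := step 1.7922493 3.2121572 (by norm_num) (by norm_num) (by norm_num)
  have c2 := step 1.3387492 1.7922493 (by norm_num) (by norm_num) (by norm_num)
  have c3 := step 1.1570434 1.3387492 (by norm_num) (by norm_num) (by norm_num)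
  have c4 := step 1.0756596 1.1570434 (by norm_num) (by norm_num) (by norm_num)
  have c5 := step 1.0371402 1.0756596 (by norm_num) (by norm_num) (by norm_num)
  have c6 := step 1.0184009 1.0371402 (by norm_num) (by norm_num) (by norm_num)
  have cbase : Real.log 1.0184009 ≤ (1.0184009:ℝ) - 1 :=
    Real.log_le_sub_one_of_pos (by norm_num)
  have hlogA : Real.log 3.2121572 ≤ 64 * ((1.0184009:ℝ) - 1) := by linarith
  have hφ : φ 10 ≤ 16 * Real.log (cc / S + Real.sqrt ((cc/S)^2 - 1)) := by
    rw [φ, _root_.arcosh]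
    rw [show Real.cos (π/8) = cc from rfl]
  rw [G]
  have hfin : 16 * (64 * ((1.0184009:ℝ) - 1)) < 10 * 1.9644672 := by norm_num
  nlinarith [hlog, hlogA, hφ]

end StmtAux

namespace StmtAux

lemma psi_contAt {z : ℝ} (hz : z ∈ Ioo 0 (6*π)) : ContinuousAt ψ z := by
  obtain ⟨hS, hSc, hC⟩ := basic hz
  have hw2 : (0:ℝ) < cc^2 - Real.sin (sf z)^2 := by nlinarith [cc_pos]
  have hcont_sf : Continuous sf := by unfold sf; continuity
  unfold ψ
  apply ContinuousAt.div
  · exact (continuous_const.mul (Real.continuous_cos.comp hcont_sf)).continuousAt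
  · exact ((Real.continuous_sin.comp hcont_sf).mul (Real.continuous_sqrt.comp
      (continuous_const.sub ((Real.continuous_sin.comp hcont_sf).pow 2)))).continuousAt
  · exact ne_of_gt (mul_pos hS (Real.sqrt_pos.2 hw2))

lemma exists_root : ∃ x₀ ∈ Ioo (9:ℝ) 10, G x₀ = 0 := by
  have hGcont : ContinuousOn G (Icc (9:ℝ) 10) := by
    intro z hz
    have hzmem : z ∈ Ioo 0 (6*π) :=
      ⟨by linarith [hz.1], by nlinarith [hz.2, six_pi_gt]⟩
    exact ((continuousAt_id.mul (psi_contAt hzmem)).sub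
      (phi_contAt (by linarith [hz.1]) hzmem.2)).continuousWithinAt
  have h0 : (0:ℝ) ∈ Ioo (G 9) (G 10) := ⟨G9_neg, G10_pos⟩
  obtain ⟨x₀, hx₀, hGx₀⟩ := intermediate_value_Ioo (by norm_num : (9:ℝ) ≤ 10) hGcont h0
  exact ⟨x₀, hx₀, hGx₀⟩

end StmtAux

open StmtAux

theorem stmt_8 :
    ∃ x₀ : ℝ, x₀ ∈ Set.Ioo 0 (6 * π) ∧
      x₀ * deriv φ x₀ - φ x₀ = 0 ∧
      (∀ y ∈ Set.Ioo 0 (6 * π), y * deriv φ y - φ y = 0 → y = x₀) ∧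
      x₀ ∈ Set.Ioo (9 : ℝ) 10 ∧ 2 * π < x₀ := by
  obtain ⟨x₀, hx₀mem, hGx₀⟩ := exists_root
  have hx₀Ioo : x₀ ∈ Ioo 0 (6*π) :=
    ⟨by linarith [hx₀mem.1], by nlinarith [hx₀mem.2, six_pi_gt]⟩
  have hroot : ∀ y ∈ Ioo 0 (6*π), y * deriv φ y - φ y = 0 → G y = 0 := by
    intro y hy h
    rw [G, (hasDeriv hy).deriv] at *
    linarith [h, (hasDeriv hy).deriv]
  have hGderiv : ∀ y ∈ Ioo 0 (6*π), y * deriv φ y - φ y = G y := by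
    intro y hy
    rw [G, (hasDeriv hy).deriv]
  refine ⟨x₀, ?_, ?_, ?_, hx₀mem, ?_⟩
  · exact (by convert hx₀Ioo using 2 : x₀ ∈ Set.Ioo 0 (6*π))
  · rw [hGderiv x₀ hx₀Ioo]; exact hGx₀
  · intro y hy hy0
    have hGy : G y = 0 := by rw [← hGderiv y hy]; exact hy0
    rcases lt_trichotomy y x₀ with hlt | heq | hgt
    · exfalso
      rcases le_or_gt y xstar with hc | hc
      · exact absurd hGy (ne_of_lt (G_neg_A hy hc))
      · have := G_lt_G hy hx₀Ioo hc.le hlt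
        rw [hGy, hGx₀] at this
        exact lt_irrefl 0 this
    · exact heq
    · exfalso
      have hxs : xstar ≤ x₀ := by linarith [xstar_lt_9, hx₀mem.1]
      have := G_lt_G hx₀Ioo hy hxs hgt
      rw [hGy, hGx₀] at this
      exact lt_irrefl 0 this
  · nlinarith [pi_ub, hx₀mem.1]
end

section
/- Let φ(x) = 16·arcosh(cos(π/8)/sin((6π − x)/16)). The equation cos²(π/8) = sin²((6π−x)/16)·(1 + cos²((6π−x)/16)) has exactly one solution x in (0, 6π), and φ''(x) = 0 at exactly this point. -/
open Real

noncomputable def ψ (x : ℝ) : ℝ :=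
  Real.cos (π/8) * Real.cos ((6*π - x)/16) /
    (Real.sin ((6*π - x)/16) * Real.sqrt (Real.cos (π/8)^2 - Real.sin ((6*π - x)/16)^2))

lemma theta_mem {y : ℝ} (hy : y ∈ Set.Ioo 0 (6*π)) :
    0 < (6*π - y)/16 ∧ (6*π - y)/16 < 3*π/8 := by
  obtain ⟨h1, h2⟩ := hy
  constructor <;> [linarith; linarith]

lemma sin_lt_c {θ : ℝ} (h1 : 0 < θ) (h2 : θ < 3*π/8) : Real.sin θ < Real.cos (π/8) := by
  rw [show Real.cos (π/8) = Real.sin (3*π/8) by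
    rw [show 3*π/8 = π/2 - π/8 by ring, Real.sin_pi_div_two_sub]]
  apply Real.strictMonoOn_sin ⟨by linarith, le_of_lt (by nlinarith [Real.pi_pos])⟩
    ⟨by nlinarith [Real.pi_pos], by nlinarith [Real.pi_pos]⟩ h2

lemma sin_pos' {θ : ℝ} (h1 : 0 < θ) (h2 : θ < 3*π/8) : 0 < Real.sin θ :=
  Real.sin_pos_of_pos_of_lt_pi h1 (by nlinarith [Real.pi_pos])

lemma phi_eq {x : ℝ} (hx : x ∈ Set.Ioo 0 (6*π)) :
    φ x = 16 * (Real.log (Real.cos (π/8) + Real.sqrt (Real.cos (π/8)^2 - Real.sin ((6*π - x)/16)^2))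
      - Real.log (Real.sin ((6*π - x)/16))) := by
  obtain ⟨h1, h2⟩ := theta_mem hx
  set θ := (6*π - x)/16
  have hs := sin_pos' h1 h2
  have hsc := sin_lt_c h1 h2
  have hc : 0 < Real.cos (π/8) := lt_trans hs hsc
  have hrr : (0:ℝ) < Real.cos (π/8)^2 - Real.sin θ^2 := by nlinarith
  have hr : 0 < Real.sqrt (Real.cos (π/8)^2 - Real.sin θ^2) := Real.sqrt_pos.2 hrr
  unfold φ _root_.arcosh
  have h3 : (Real.cos (π/8) / Real.sin θ)^2 - 1 = (Real.cos (π/8)^2 - Real.sin θ^2)/Real.sin θ^2 := by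
    field_simp
  rw [h3, Real.sqrt_div hrr.le, Real.sqrt_sq hs.le,
    show Real.cos (π/8) / Real.sin θ + Real.sqrt (Real.cos (π/8)^2 - Real.sin θ^2) / Real.sin θ
      = (Real.cos (π/8) + Real.sqrt (Real.cos (π/8)^2 - Real.sin θ^2)) / Real.sin θ by ring,
    Real.log_div (by positivity) (ne_of_gt hs)]

lemma hasDerivAt_F {y : ℝ} (hs : 0 < Real.sin ((6*π - y)/16))
    (hc : 0 < Real.cos (π/8))
    (hrr : (0:ℝ) < Real.cos (π/8)^2 - Real.sin ((6*π - y)/16)^2) :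
    HasDerivAt (fun x => 16 * (Real.log (Real.cos (π/8) + Real.sqrt (Real.cos (π/8)^2 - Real.sin ((6*π - x)/16)^2))
      - Real.log (Real.sin ((6*π - x)/16)))) (ψ y) y := by
  set c := Real.cos (π/8)
  set θ := (6*π - y)/16 with hθ
  set s := Real.sin θ
  set cs := Real.cos θ
  set r := Real.sqrt (c^2 - s^2) with hrdef
  have hr : 0 < r := Real.sqrt_pos.2 hrr
  have hθ' : HasDerivAt (fun x : ℝ => (6*π - x)/16) (-1/16) y := by
    have := ((hasDerivAt_id y).const_sub (6*π)).div_const 16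
    simpa using this
  have hsin : HasDerivAt (fun x => Real.sin ((6*π - x)/16)) (cs * (-1/16)) y := hθ'.sin
  have hinner : HasDerivAt (fun x => c^2 - Real.sin ((6*π - x)/16)^2)
      (-(2 * s^1 * (cs * (-1/16)))) y := (hsin.pow 2).const_sub _
  have hsqrt : HasDerivAt (fun x => Real.sqrt (c^2 - Real.sin ((6*π - x)/16)^2))
      ((-(2 * s^1 * (cs * (-1/16)))) / (2 * r)) y := hinner.sqrt (ne_of_gt hrr)
  have hlog1 : HasDerivAt (fun x => Real.log (c + Real.sqrt (c^2 - Real.sin ((6*π - x)/16)^2)))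
      (((-(2 * s^1 * (cs * (-1/16)))) / (2 * r)) / (c + r)) y :=
    (hsqrt.const_add c).log (by positivity)
  have hlog2 : HasDerivAt (fun x => Real.log (Real.sin ((6*π - x)/16)))
      ((cs * (-1/16)) / s) y := hsin.log (ne_of_gt hs)
  have := ((hlog1.sub hlog2).const_mul 16)
  refine this.congr_deriv (Eq.symm ?_)
  have hr2 : r^2 = c^2 - s^2 := Real.sq_sqrt hrr.le
  unfold ψ
  rw [← hθ]
  show c * cs / (s * r) = _
  clear_value c r
  field_simp
  ring_nf
  linear_combination (-cs) * hr2

lemma hasDerivAt_psi {y : ℝ} (hs : 0 < Real.sin ((6*π - y)/16))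
    (hc : 0 < Real.cos (π/8))
    (hrr : (0:ℝ) < Real.cos (π/8)^2 - Real.sin ((6*π - y)/16)^2) :
    HasDerivAt ψ
      (Real.cos (π/8) * (Real.cos (π/8)^2 - Real.sin ((6*π - y)/16)^2 * (1 + Real.cos ((6*π - y)/16)^2)) /
        (16 * Real.sin ((6*π - y)/16)^2 * Real.sqrt (Real.cos (π/8)^2 - Real.sin ((6*π - y)/16)^2)^3)) y := by
  set c := Real.cos (π/8)
  set θ := (6*π - y)/16 with hθ
  set s := Real.sin θ with hsdef
  set cs := Real.cos θ with hcsdef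
  set r := Real.sqrt (c^2 - s^2) with hrdef
  have hr : 0 < r := Real.sqrt_pos.2 hrr
  have hθ' : HasDerivAt (fun x : ℝ => (6*π - x)/16) (-1/16) y := by
    have := ((hasDerivAt_id y).const_sub (6*π)).div_const 16
    simpa using this
  have hsin : HasDerivAt (fun x => Real.sin ((6*π - x)/16)) (cs * (-1/16)) y := hθ'.sin
  have hcos : HasDerivAt (fun x => Real.cos ((6*π - x)/16)) (-s * (-1/16)) y := hθ'.cos
  have hinner : HasDerivAt (fun x => c^2 - Real.sin ((6*π - x)/16)^2)
      (-(2 * s^1 * (cs * (-1/16)))) y := (hsin.pow 2).const_sub _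
  have hsqrt : HasDerivAt (fun x => Real.sqrt (c^2 - Real.sin ((6*π - x)/16)^2))
      ((-(2 * s^1 * (cs * (-1/16)))) / (2 * r)) y := hinner.sqrt (ne_of_gt hrr)
  have hnum : HasDerivAt (fun x => c * Real.cos ((6*π - x)/16)) (c * (-s * (-1/16))) y :=
    hcos.const_mul c
  have hden : HasDerivAt (fun x => Real.sin ((6*π - x)/16) * Real.sqrt (c^2 - Real.sin ((6*π - x)/16)^2))
      ((cs * (-1/16)) * r + s * ((-(2 * s^1 * (cs * (-1/16)))) / (2 * r))) y := hsin.mul hsqrt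
  have hdiv := hnum.div hden (by positivity)
  rw [← hθ, ← hsdef, ← hcsdef, ← hrdef] at hdiv
  refine hdiv.congr_deriv (Eq.symm ?_)
  have hr2 : r^2 = c^2 - s^2 := Real.sq_sqrt hrr.le
  have hpyth : s^2 + cs^2 = 1 := Real.sin_sq_add_cos_sq θ
  clear_value r s cs θ c
  field_simp
  ring_nf
  linear_combination (-1) * hr2 + (-r^2) * hpyth

lemma unique_alg {a b p q t : ℝ} (ha : 0 < a) (ha1 : a < 1) (hab : a^2 + b^2 = 1)
    (hpq : p^2 + q^2 = 1) (hp : 0 < p) (ht : t^2 = 1 - p) (htpos : 0 < t)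
    (heq : q^2 = a^2*(1+b^2)) : a = t := by
  have hsq : (1 - a^2)^2 = p^2 := by nlinarith
  have h1my : 0 < 1 - a^2 := by nlinarith
  have heq2 : 1 - a^2 = p := by nlinarith [sq_nonneg (1 - a^2 - p), sq_nonneg (1 - a^2 + p)]
  have hsy2 : a^2 = t^2 := by nlinarith
  nlinarith

lemma deriv_phi_eq {z : ℝ} (hz : z ∈ Set.Ioo 0 (6*π)) : deriv φ z = ψ z := by
  obtain ⟨h1, h2⟩ := theta_mem hz
  have hs := sin_pos' h1 h2
  have hsc := sin_lt_c h1 h2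
  have hc : 0 < Real.cos (π/8) := lt_trans hs hsc
  have hrr : (0:ℝ) < Real.cos (π/8)^2 - Real.sin ((6*π - z)/16)^2 := by nlinarith
  have hev : φ =ᶠ[nhds z]
      (fun x => 16 * (Real.log (Real.cos (π/8) + Real.sqrt (Real.cos (π/8)^2 - Real.sin ((6*π - x)/16)^2))
        - Real.log (Real.sin ((6*π - x)/16)))) :=
    Filter.eventuallyEq_of_mem (isOpen_Ioo.mem_nhds hz) (fun w hw => phi_eq hw)
  rw [hev.deriv_eq]
  exact (hasDerivAt_F hs hc hrr).deriv

lemma deriv2_phi_eq {y : ℝ} (hy : y ∈ Set.Ioo 0 (6*π)) :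
    deriv (deriv φ) y =
      Real.cos (π/8) * (Real.cos (π/8)^2 - Real.sin ((6*π - y)/16)^2 * (1 + Real.cos ((6*π - y)/16)^2)) /
        (16 * Real.sin ((6*π - y)/16)^2 * Real.sqrt (Real.cos (π/8)^2 - Real.sin ((6*π - y)/16)^2)^3) := by
  obtain ⟨h1, h2⟩ := theta_mem hy
  have hs := sin_pos' h1 h2
  have hsc := sin_lt_c h1 h2
  have hc : 0 < Real.cos (π/8) := lt_trans hs hsc
  have hrr : (0:ℝ) < Real.cos (π/8)^2 - Real.sin ((6*π - y)/16)^2 := by nlinarith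
  have hev : deriv φ =ᶠ[nhds y] ψ :=
    Filter.eventuallyEq_of_mem (isOpen_Ioo.mem_nhds hy) (fun w hw => deriv_phi_eq hw)
  rw [hev.deriv_eq]
  exact (hasDerivAt_psi hs hc hrr).deriv

set_option maxHeartbeats 2000000 in
theorem stmt_9 :
    ∃ x₀ : ℝ, x₀ ∈ Set.Ioo 0 (6 * π) ∧
      Real.cos (π / 8) ^ 2 =
        Real.sin ((6 * π - x₀) / 16) ^ 2 * (1 + Real.cos ((6 * π - x₀) / 16) ^ 2) ∧
      (∀ y ∈ Set.Ioo 0 (6 * π),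
        Real.cos (π / 8) ^ 2 =
            Real.sin ((6 * π - y) / 16) ^ 2 * (1 + Real.cos ((6 * π - y) / 16) ^ 2) →
          y = x₀) ∧
      (∀ y ∈ Set.Ioo 0 (6 * π),
        deriv (deriv φ) y = 0 ↔
          Real.cos (π / 8) ^ 2 =
            Real.sin ((6 * π - y) / 16) ^ 2 * (1 + Real.cos ((6 * π - y) / 16) ^ 2)) := by
  have hpi := Real.pi_pos
  have hsin8 : 0 < Real.sin (π/8) := Real.sin_pos_of_pos_of_lt_pi (by linarith) (by linarith)
  have hcos8 : 0 < Real.cos (π/8) := Real.cos_pos_of_mem_Ioo ⟨by linarith, by linarith⟩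
  have hpyth8 : Real.sin (π/8)^2 + Real.cos (π/8)^2 = 1 := Real.sin_sq_add_cos_sq _
  have hsin8lt : Real.sin (π/8) < 1 := by nlinarith
  set t : ℝ := Real.sqrt (1 - Real.sin (π/8)) with htdef
  have ht2 : t^2 = 1 - Real.sin (π/8) := Real.sq_sqrt (by linarith)
  have htpos : 0 < t := Real.sqrt_pos.2 (by linarith)
  have htlt : t < Real.cos (π/8) := by nlinarith
  have htle1 : t ≤ 1 := by nlinarith
  set θ₀ : ℝ := Real.arcsin t with hθ₀def
  have hsinθ₀ : Real.sin θ₀ = t := Real.sin_arcsin (by linarith) htle1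
  have hθ₀pos : 0 < θ₀ := Real.arcsin_pos.2 htpos
  have hθ₀lt : θ₀ < 3*π/8 := by
    have h38 : Real.arcsin (Real.cos (π/8)) = 3*π/8 := by
      rw [show Real.cos (π/8) = Real.sin (3*π/8) by
        rw [show 3*π/8 = π/2 - π/8 by ring, Real.sin_pi_div_two_sub]]
      exact Real.arcsin_sin (by linarith) (by linarith)
    calc θ₀ < Real.arcsin (Real.cos (π/8)) :=
          Real.strictMonoOn_arcsin ⟨by linarith, htle1⟩ ⟨by linarith, Real.cos_le_one _⟩ htlt
      _ = 3*π/8 := h38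
  clear_value t θ₀
  refine ⟨6*π - 16*θ₀, ⟨by linarith, by linarith⟩, ?_, ?_, ?_⟩
  · have harg : (6*π - (6*π - 16*θ₀))/16 = θ₀ := by ring
    rw [harg, hsinθ₀]
    have hcosθ₀ : Real.cos θ₀^2 = Real.sin (π/8) := by
      have := Real.sin_sq_add_cos_sq θ₀
      rw [hsinθ₀] at this
      nlinarith
    rw [hcosθ₀]
    nlinarith
  · intro y hy heq
    obtain ⟨h1, h2⟩ := theta_mem hy
    set θy := (6*π - y)/16 with hθydef
    have hsy := sin_pos' h1 h2
    have hsylt1 : Real.sin θy < 1 := lt_of_lt_of_le (sin_lt_c h1 h2) (Real.cos_le_one _)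
    have hpy : Real.sin θy^2 + Real.cos θy^2 = 1 := Real.sin_sq_add_cos_sq θy
    have hsyeq : Real.sin θy = Real.sin θ₀ := by
      rw [hsinθ₀]
      exact unique_alg hsy hsylt1 hpy (by nlinarith) hsin8 ht2 htpos heq
    have hθeq : θy = θ₀ := by
      apply Real.injOn_sin ⟨by linarith, by linarith⟩ ⟨by linarith, by linarith⟩ hsyeq
    have : (6*π - y)/16 = θ₀ := hθeq
    linarith
  · intro y hy
    obtain ⟨h1, h2⟩ := theta_mem hy
    have hs := sin_pos' h1 h2
    have hsc := sin_lt_c h1 h2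
    have hrr : (0:ℝ) < Real.cos (π/8)^2 - Real.sin ((6*π - y)/16)^2 := by nlinarith
    have hr : 0 < Real.sqrt (Real.cos (π/8)^2 - Real.sin ((6*π - y)/16)^2) := Real.sqrt_pos.2 hrr
    rw [deriv2_phi_eq hy]
    set c := Real.cos (π/8)
    set s := Real.sin ((6*π - y)/16)
    set b := Real.cos ((6*π - y)/16)
    set r := Real.sqrt (c^2 - s^2)
    clear_value c s b r
    rw [div_eq_zero_iff]
    constructor
    · rintro (h | h)
      · rcases mul_eq_zero.1 h with h' | h'
        · exact absurd h' (ne_of_gt hcos8)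
        · linarith
      · exfalso
        have : (0:ℝ) < 16 * s^2 * r^3 := by positivity
        linarith
    · intro h
      left
      rw [← h]
      ring
end

section
/- Let u: [a,b] → ℝ be continuous on [a,b] and differentiable on (a,b), suppose the graph of u does not meet the chord joining (a, u(a)) and (b, u(b)) at any interior point of (a,b), and suppose u'(x) → +∞ as x → a⁺. Then for every x in (a,b), u(x) > u(a) + ((u(b) − u(a))/(b − a))·(x − a); consequently, for every x in (0, b−a), u(a + x) + u(b − x) > u(a) + u(b). -/
/-!
Since `u' → +∞` at `a`, the mean value theorem puts `u` strictly above its chord just to the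
right of `a`. The gap between `u` and the chord is continuous on the connected interval `(a, b)`
and never vanishes there, so it keeps that sign throughout. The second claim
follows because the chord values at `a + x` and `b - x` add up to `u a + u b`.
-/

open Set Filter Topology

theorem IsPreconnected.forall_lt_of_ne {X α : Type*} [TopologicalSpace X] [LinearOrder α]
    [TopologicalSpace α] [OrderClosedTopology α] {s : Set X} (hs : IsPreconnected s)
    {f g : X → α} (hf : ContinuousOn f s) (hg : ContinuousOn g s) (hne : ∀ x ∈ s, f x ≠ g x)
    {y : X} (hy : y ∈ s) (hlt : f y < g y) : ∀ x ∈ s, f x < g x := by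
  intro x hx
  by_contra! hle
  obtain ⟨z, hz, hfgz⟩ := hs.intermediate_value₂ hy hx hf hg hlt.le hle
  exact hne z hz hfgz

theorem exists_line_lt_of_tendsto_deriv_atTop {u : ℝ → ℝ} {a b : ℝ} (hab : a < b)
    (hcont : ContinuousOn u (Icc a b)) (hdiff : ∀ x ∈ Ioo a b, DifferentiableAt ℝ u x)
    (hderiv : Tendsto (deriv u) (𝓝[>] a) atTop) (m : ℝ) :
    ∃ x ∈ Ioo a b, u a + m * (x - a) < u x := by
  have hev : ∀ᶠ y in 𝓝[>] a, m < deriv u y ∧ y ∈ Ioo a b :=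
    (hderiv.eventually_gt_atTop m).and (Ioo_mem_nhdsGT hab)
  obtain ⟨x, hax, hsub⟩ := mem_nhdsGT_iff_exists_Ioc_subset.mp hev
  have hx : x ∈ Ioo a b := (hsub ⟨hax, le_rfl⟩).2
  have hIcc : Icc a x ⊆ Icc a b := Icc_subset_Icc_right hx.2.le
  obtain ⟨ξ, hξ, hξslope⟩ := exists_deriv_eq_slope u hax (hcont.mono hIcc)
    fun y hy => (hdiff y (hsub (Ioo_subset_Ioc_self hy)).2).differentiableWithinAt
  have hmξ : m < (u x - u a) / (x - a) := hξslope ▸ (hsub (Ioo_subset_Ioc_self hξ)).1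
  refine ⟨x, hx, ?_⟩
  linarith [(lt_div_iff₀ (sub_pos.mpr hax)).mp hmξ]

theorem add_lt_add_of_chord_lt {u : ℝ → ℝ} {a b : ℝ} (hab : a < b)
    (hchord : ∀ x ∈ Ioo a b, u a + (u b - u a) / (b - a) * (x - a) < u x) :
    ∀ x ∈ Ioo 0 (b - a), u a + u b < u (a + x) + u (b - x) := by
  intro x ⟨hx0, hxba⟩
  have hleft := hchord (a + x) ⟨by linarith, by linarith⟩
  have hright := hchord (b - x) ⟨by linarith, by linarith⟩
  have hslope : (u b - u a) / (b - a) * (b - a) = u b - u a :=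
    div_mul_cancel₀ _ (sub_pos.mpr hab).ne'
  linarith

theorem stmt_10 (a b : ℝ) (hab : a < b) (u : ℝ → ℝ)
    (hcont : ContinuousOn u (Set.Icc a b))
    (hdiff : ∀ x ∈ Set.Ioo a b, DifferentiableAt ℝ u x)
    (hderiv : Filter.Tendsto (deriv u) (nhdsWithin a (Set.Ioi a)) Filter.atTop)
    (hchord : ∀ x ∈ Set.Ioo a b,
      u x ≠ u a + (u b - u a) / (b - a) * (x - a)) :
    (∀ x ∈ Set.Ioo a b, u x > u a + (u b - u a) / (b - a) * (x - a)) ∧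
    (∀ x ∈ Set.Ioo 0 (b - a), u (a + x) + u (b - x) > u a + u b) := by
  obtain ⟨x₀, hx₀, hx₀_above⟩ := exists_line_lt_of_tendsto_deriv_atTop hab hcont hdiff hderiv
    ((u b - u a) / (b - a))
  have habove : ∀ x ∈ Ioo a b, u a + (u b - u a) / (b - a) * (x - a) < u x :=
    isPreconnected_Ioo.forall_lt_of_ne (by fun_prop) (hcont.mono Ioo_subset_Icc_self)
      (fun x hx => (hchord x hx).symm) hx₀ hx₀_above
  exact ⟨habove, add_lt_add_of_chord_lt hab habove⟩
end

section
/- For c > 1, the function φ_c(x) = 2x·arcosh(c·cos(π/(2x))) is strictly concave on (a_c, ∞), where a_c = π/(2·arccos(1/c)). -/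
open Real

lemma arcosh_hasDerivAt {w : ℝ} (hw : 1 < w) :
    HasDerivAt _root_.arcosh (1 / Real.sqrt (w ^ 2 - 1)) w := by
  have h1 : (0:ℝ) < w ^ 2 - 1 := by nlinarith
  have hs : 0 < Real.sqrt (w ^ 2 - 1) := Real.sqrt_pos.2 h1
  set s := Real.sqrt (w ^ 2 - 1) with hsdef
  have hss : s * s = w ^ 2 - 1 := Real.mul_self_sqrt h1.le
  have d1 : HasDerivAt (fun y : ℝ => y ^ 2 - 1) (2 * w) w := by
    simpa using (hasDerivAt_pow 2 w).sub_const 1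
  have d2 : HasDerivAt (fun y : ℝ => Real.sqrt (y ^ 2 - 1)) (1 / (2 * s) * (2 * w)) w :=
    (Real.hasDerivAt_sqrt h1.ne').comp w d1
  have d3 : HasDerivAt (fun y : ℝ => y + Real.sqrt (y ^ 2 - 1)) (1 + 1 / (2 * s) * (2 * w)) w :=
    (hasDerivAt_id w).add d2
  have hne : w + s ≠ 0 := by positivity
  have d4 := d3.log hne
  have : HasDerivAt _root_.arcosh ((1 + 1 / (2 * s) * (2 * w)) / (w + s)) w := d4
  convert this using 1
  field_simp
  nlinarith [hss]

/-- derivative of t ↦ _root_.arcosh (c cos t) -/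
noncomputable def hh1 (c t : ℝ) : ℝ :=
  -(c * Real.sin t) / Real.sqrt ((c * Real.cos t) ^ 2 - 1)

/-- second derivative of t ↦ _root_.arcosh (c cos t) -/
noncomputable def HH2 (c t : ℝ) : ℝ :=
  -(c * Real.cos t * (((c * Real.cos t) ^ 2 - 1) + c ^ 2 * Real.sin t ^ 2)) /
    (Real.sqrt ((c * Real.cos t) ^ 2 - 1) * ((c * Real.cos t) ^ 2 - 1))

noncomputable def Gf (c t : ℝ) : ℝ := 2 * _root_.arcosh (c * Real.cos t) - 2 * (t * hh1 c t)

lemma hasDerivAt_inner (c : ℝ) (t : ℝ) :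
    HasDerivAt (fun u : ℝ => (c * Real.cos u) ^ 2 - 1)
      (2 * (c * Real.cos t) ^ 1 * (c * -Real.sin t)) t :=
  (((Real.hasDerivAt_cos t).const_mul c).pow 2).sub_const 1

lemma hasDerivAt_hh1 (c : ℝ) {t : ℝ} (hw : 1 < c * Real.cos t) :
    HasDerivAt (hh1 c) (HH2 c t) t := by
  have hq : (0:ℝ) < (c * Real.cos t) ^ 2 - 1 := by nlinarith
  have hs : 0 < Real.sqrt ((c * Real.cos t) ^ 2 - 1) := Real.sqrt_pos.2 hq
  set s := Real.sqrt ((c * Real.cos t) ^ 2 - 1) with hsdef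
  have hss : s * s = (c * Real.cos t) ^ 2 - 1 := Real.mul_self_sqrt hq.le
  have df : HasDerivAt (fun u : ℝ => -(c * Real.sin u)) (-(c * Real.cos t)) t :=
    ((Real.hasDerivAt_sin t).const_mul c).neg
  have dg : HasDerivAt (fun u : ℝ => Real.sqrt ((c * Real.cos u) ^ 2 - 1))
      (1 / (2 * s) * (2 * (c * Real.cos t) ^ 1 * (c * -Real.sin t))) t :=
    (Real.hasDerivAt_sqrt hq.ne').comp t (hasDerivAt_inner c t)
  have d := df.div dg hs.ne'
  have : HasDerivAt (hh1 c)
      ((-(c * Real.cos t) * s -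
        -(c * Real.sin t) * (1 / (2 * s) * (2 * (c * Real.cos t) ^ 1 * (c * -Real.sin t)))) /
        s ^ 2) t := d
  convert this using 1
  unfold HH2
  rw [← hsdef]
  rw [← hss]
  field_simp
  ring

lemma hasDerivAt_harc (c : ℝ) {t : ℝ} (hw : 1 < c * Real.cos t) :
    HasDerivAt (fun u : ℝ => _root_.arcosh (c * Real.cos u)) (hh1 c t) t := by
  have d := (arcosh_hasDerivAt hw).comp t ((Real.hasDerivAt_cos t).const_mul c)
  have : HasDerivAt (fun u : ℝ => _root_.arcosh (c * Real.cos u))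
      (1 / Real.sqrt ((c * Real.cos t) ^ 2 - 1) * (c * -Real.sin t)) t := d
  convert this using 1
  unfold hh1
  ring

lemma hasDerivAt_Gf (c : ℝ) {t : ℝ} (hw : 1 < c * Real.cos t) :
    HasDerivAt (Gf c) (-2 * t * HH2 c t) t := by
  have d : HasDerivAt (Gf c)
      (2 * hh1 c t - 2 * (1 * hh1 c t + t * HH2 c t)) t :=
    ((hasDerivAt_harc c hw).const_mul 2).sub
      (((hasDerivAt_id t).mul (hasDerivAt_hh1 c hw)).const_mul 2)
  convert d using 1
  ring

theorem stmt_11 (c : ℝ) (hc : 1 < c) :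
    StrictConcaveOn ℝ (Set.Ioi (π / (2 * Real.arccos (1 / c))))
      (fun x : ℝ => 2 * x * _root_.arcosh (c * Real.cos (π / (2 * x)))) := by
  have hc0 : (0:ℝ) < c := lt_trans one_pos hc
  set θ := Real.arccos (1 / c) with hθdef
  have hθpos : 0 < θ := Real.arccos_pos.2 (by rw [div_lt_one hc0]; linarith)
  have hθπ : θ ≤ π := Real.arccos_le_pi _
  have hcosθ : Real.cos θ = 1 / c :=
    Real.cos_arccos
      (by
        have h01 : (0:ℝ) < 1 / c := by positivity
        linarith)
      (by rw [div_le_one hc0]; linarith)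
  set a := π / (2 * θ) with hadef
  have hπ := Real.pi_pos
  have hapos : 0 < a := by positivity
  -- basic facts about t = π/(2x) for x > a
  have key : ∀ x : ℝ, a < x → 0 < π / (2 * x) ∧ π / (2 * x) < θ ∧
      1 < c * Real.cos (π / (2 * x)) := by
    intro x hx
    have hx0 : 0 < x := lt_trans hapos hx
    have ht0 : 0 < π / (2 * x) := by positivity
    have htθ : π / (2 * x) < θ := by
      rw [div_lt_iff₀ (by positivity)]
      have : π < x * (2 * θ) := (div_lt_iff₀ (by positivity)).1 hx
      nlinarith
    have hcos : Real.cos θ < Real.cos (π / (2 * x)) :=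
      Real.strictAntiOn_cos ⟨ht0.le, by linarith⟩ ⟨hθpos.le, hθπ⟩ htθ
    rw [hcosθ] at hcos
    refine ⟨ht0, htθ, ?_⟩
    have h1 : 1 / c < Real.cos (π / (2 * x)) := hcos
    have : c * (1 / c) < c * Real.cos (π / (2 * x)) := by
      exact (mul_lt_mul_iff_right₀ hc0).2 h1
    rwa [mul_one_div_cancel hc0.ne'] at this
  -- derivative of t(x) = π/(2x)
  have dtx : ∀ x : ℝ, 0 < x → HasDerivAt (fun y : ℝ => π / (2 * y))
      (π * (-2 / (2 * x) ^ 2)) x := by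
    intro x hx0
    have h := (((hasDerivAt_id x).const_mul 2).inv (by positivity : (2 * x) ≠ 0)).const_mul π
    simp only [id_eq, mul_one] at h
    exact h
  -- first derivative of f
  have hφ : ∀ x ∈ Set.Ioi a, HasDerivAt
      (fun x : ℝ => 2 * x * _root_.arcosh (c * Real.cos (π / (2 * x))))
      (Gf c (π / (2 * x))) x := by
    intro x hx
    have hx0 : 0 < x := lt_trans hapos hx
    obtain ⟨ht0, htθ, hw⟩ := key x hx
    have dA : HasDerivAt (fun y : ℝ => _root_.arcosh (c * Real.cos (π / (2 * y))))
        (hh1 c (π / (2 * x)) * (π * (-2 / (2 * x) ^ 2))) x :=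
      HasDerivAt.comp (h₂ := fun u : ℝ => _root_.arcosh (c * Real.cos u)) x (hasDerivAt_harc c hw) (dtx x hx0)
    have d : HasDerivAt (fun y : ℝ => 2 * y * _root_.arcosh (c * Real.cos (π / (2 * y))))
        (2 * _root_.arcosh (c * Real.cos (π / (2 * x))) +
          2 * x * (hh1 c (π / (2 * x)) * (π * (-2 / (2 * x) ^ 2)))) x :=
      by have d0 := ((hasDerivAt_id x).const_mul 2).mul dA
         simp only [id_eq, mul_one] at d0
         exact d0
    convert d using 1
    unfold Gf
    have h4 : (2 * x) ^ 2 = 4 * x ^ 2 := by ring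
    field_simp
    ring
  apply strictConcaveOn_of_deriv2_neg (convex_Ioi a)
  · exact fun x hx => (hφ x hx).continuousAt.continuousWithinAt
  · intro x hx
    rw [interior_Ioi] at hx
    have hx0 : 0 < x := lt_trans hapos hx
    obtain ⟨ht0, htθ, hw⟩ := key x hx
    have hev : deriv (fun x : ℝ => 2 * x * _root_.arcosh (c * Real.cos (π / (2 * x))))
        =ᶠ[nhds x] fun y : ℝ => Gf c (π / (2 * y)) :=
      Filter.eventuallyEq_of_mem (Ioi_mem_nhds hx) fun y hy => (hφ y hy).deriv
    have h2 : deriv^[2] (fun x : ℝ => 2 * x * _root_.arcosh (c * Real.cos (π / (2 * x)))) x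
        = deriv (deriv (fun x : ℝ => 2 * x * _root_.arcosh (c * Real.cos (π / (2 * x))))) x := rfl
    rw [h2, hev.deriv_eq]
    have hG : HasDerivAt (fun y : ℝ => Gf c (π / (2 * y)))
        (-2 * (π / (2 * x)) * HH2 c (π / (2 * x)) * (π * (-2 / (2 * x) ^ 2))) x :=
      HasDerivAt.comp (h₂ := Gf c) x (hasDerivAt_Gf c hw) (dtx x hx0)
    rw [hG.deriv]
    -- sign analysis
    have hq : (0:ℝ) < (c * Real.cos (π / (2 * x))) ^ 2 - 1 := by nlinarith
    have hs : 0 < Real.sqrt ((c * Real.cos (π / (2 * x))) ^ 2 - 1) := Real.sqrt_pos.2 hq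
    have hH2 : HH2 c (π / (2 * x)) < 0 := by
      unfold HH2
      apply div_neg_of_neg_of_pos
      · have hcC : 0 < c * Real.cos (π / (2 * x)) := lt_trans one_pos hw
        have := sq_nonneg (c * Real.sin (π / (2 * x)))
        nlinarith [sq_nonneg (Real.sin (π / (2 * x)))]
      · positivity
    have hD : π * (-2 / (2 * x) ^ 2) < 0 := by
      have h1 : (0:ℝ) < (2 * x) ^ 2 := by positivity
      have : -2 / (2 * x) ^ 2 < 0 := div_neg_of_neg_of_pos (by norm_num) h1
      exact mul_neg_of_pos_of_neg hπ this
    have hpos : 0 < -2 * (π / (2 * x)) * HH2 c (π / (2 * x)) := by nlinarith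
    exact mul_neg_of_pos_of_neg hpos hD
end
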